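/- arXiv:1005.0325 — 7 statements merged into one kernel-verified Lean document; each statement's English description precedes it below -/
import Mathlib

section
/- Let R be a standard graded k-algebra with Hilbert series H_R(s) = 1 + es + rs^2 (so R_j = 0 for j ≥ 3). If there exists a nonzero graded R-module M with a linear resolution and Hilbert series H_M(s) = p s^d + q s^{d+1} with p ≠ 0, then the formal power series identity P^R_M(s,t) · H_R(-st) = (-t)^{-d} H_M(-st) forces q ≤ vp, where v = (e + √(e²−4r))/2. -/
/-- A standard graded `k`-algebra structure on `R`, recorded via a family of
`k`-submodules `𝒜 j` (the graded components): `R = ⊕ 𝒜 j`, `𝒜 j = 0` for `j < 0`,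
`𝒜 0 = k·1`, `R` is generated in degree one, and all components are finite dimensional. -/
structure IsStandardGraded (k : Type*) [Field k] (R : Type*) [CommRing R] [Algebra k R]
    (𝒜 : ℤ → Submodule k R) : Prop where
  internal : DirectSum.IsInternal 𝒜
  one_mem : (1 : R) ∈ 𝒜 0
  mul_mem : ∀ ⦃i j : ℤ⦄ ⦃x y : R⦄, x ∈ 𝒜 i → y ∈ 𝒜 j → x * y ∈ 𝒜 (i + j)
  bot_of_neg : ∀ i : ℤ, i < 0 → 𝒜 i = ⊥
  deg_zero : 𝒜 0 = Submodule.span k {(1 : R)}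
  gen_in_deg_one : ∀ i : ℤ, 0 ≤ i → 𝒜 (i + 1) = 𝒜 1 * 𝒜 i
  finite_dim : ∀ i : ℤ, FiniteDimensional k (𝒜 i)

/-- A grading on an `R`-module `M` compatible with a grading `𝒜` on `R`,
with finite-dimensional components. -/
structure IsGradedModule (k : Type*) [Field k] (R : Type*) [CommRing R] [Algebra k R]
    (𝒜 : ℤ → Submodule k R) (M : Type*) [AddCommGroup M] [Module R M] [Module k M]
    [IsScalarTower k R M] (ℳ : ℤ → Submodule k M) : Prop where
  internal : DirectSum.IsInternal ℳ
  smul_mem : ∀ ⦃i j : ℤ⦄ ⦃x : R⦄ ⦃m : M⦄, x ∈ 𝒜 i → m ∈ ℳ j → x • m ∈ ℳ (i + j)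
  finite_dim : ∀ j : ℤ, FiniteDimensional k (ℳ j)

/-- A linear (minimal, degree-`d`) free resolution of the graded `R`-module `M`:
an exact complex `⋯ → R(−d−n−1)^{β (n+1)} → R(−d−n)^{β n} → ⋯ → R(−d)^{β 0} → M → 0`
in which every differential is given by a matrix with entries in `R₁ = 𝒜 1`, and the
generators of the `n`-th free module map to degree `d + n`. Its existence says exactly
that `M` is a linear module with `indeg M = d` (a Koszul module when `d = 0`). -/
structure LinearResolution (k : Type*) [Field k] (R : Type*) [CommRing R] [Algebra k R]
    (𝒜 : ℤ → Submodule k R) (M : Type*) [AddCommGroup M] [Module R M] [Module k M]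
    [IsScalarTower k R M] (ℳ : ℤ → Submodule k M) (d : ℤ) where
  β : ℕ → ℕ
  dd : ∀ n : ℕ, (Fin (β (n + 1)) → R) →ₗ[R] (Fin (β n) → R)
  aug : (Fin (β 0) → R) →ₗ[R] M
  aug_surjective : Function.Surjective aug
  aug_deg : ∀ i, aug (Pi.single i 1) ∈ ℳ d
  dd_linear : ∀ (n : ℕ) (i : Fin (β (n + 1))) (j : Fin (β n)),
    dd n (Pi.single i 1) j ∈ 𝒜 1
  exact_aug : Function.Exact (dd 0) aug
  exact_dd : ∀ n : ℕ, Function.Exact (dd (n + 1)) (dd n)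

/-- `R` is a Koszul algebra: the residue field `k = R/R₊ = R/(R₁)` has a linear
free resolution over `R`. -/
def IsKoszulAlgebra (k : Type*) [Field k] (R : Type*) [CommRing R] [Algebra k R]
    (𝒜 : ℤ → Submodule k R) : Prop :=
  Nonempty (LinearResolution k R 𝒜 (R ⧸ Ideal.span (𝒜 1 : Set R))
    (fun j => (𝒜 j).map ((Ideal.span (𝒜 1 : Set R)).mkQ.restrictScalars k)) 0)


/-!
Restricting a linear resolution `F` of `M` to a fixed internal degree gives an exact complex of
finite-dimensional `k`-vector spaces (a strand), because the differentials are homogeneous and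
the projections onto graded components commute with homogeneous maps. As `R` lives in degrees
`0, 1, 2` and `M` in degrees `d, d + 1`, the relevant strands are short exact sequences, which
give `β₀ = p`, `e p = β₁ + q` and `e β_{n+1} = β_{n+2} + r β_n`. A nonnegative solution of this
recurrence satisfies `β₁ ≥ u β₀`, where `u ≤ v` are the roots of `x² - e x + r`; hence
`q = e p - β₁ ≤ (e - u) p = v p`.
-/

open DirectSum Module

section PiGrading

variable {ι k A : Type*} [Semiring k] [AddCommMonoid A] [Module k A]
  (𝒜 : ι → Submodule k A) (σ : Type*)

def piGrading (j : ι) : Submodule k (σ → A) :=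
  Submodule.pi Set.univ fun _ => 𝒜 j

variable {𝒜 σ} in
lemma piGrading_eq_bot {j : ι} (h : 𝒜 j = ⊥) : piGrading 𝒜 σ j = ⊥ :=
  (Submodule.eq_bot_iff _).mpr fun x hx => funext fun s => by
    simpa [h] using hx s trivial

def piGradingEquiv (j : ι) : piGrading 𝒜 σ j ≃ₗ[k] (σ → 𝒜 j) where
  toFun x s := ⟨(x : σ → A) s, x.2 s trivial⟩
  invFun y := ⟨fun s => y s, fun s _ => (y s).2⟩
  map_add' _ _ := rfl
  map_smul' _ _ := rfl

variable [DecidableEq σ]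

def piGrading.single (s : σ) (j : ι) : 𝒜 j →ₗ[k] piGrading 𝒜 σ j :=
  LinearMap.codRestrict _ (LinearMap.single k (fun _ => A) s ∘ₗ (𝒜 j).subtype) fun x t _ => by
    by_cases h : t = s
    · subst h; simp
    · simp [h]

variable [Fintype σ] [DecidableEq ι] [Decomposition 𝒜]

instance : Decomposition (piGrading 𝒜 σ) :=
  Decomposition.ofLinearMap _
    (∑ s, lmap (piGrading.single 𝒜 σ s) ∘ₗ (decomposeLinearEquiv 𝒜).toLinearMap ∘ₗ
      LinearMap.proj s)
    (by
      refine LinearMap.pi_ext' fun s => decompose_lhom_ext 𝒜 fun j => LinearMap.ext fun x => ?_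
      simp only [LinearMap.coe_comp, LinearMap.coe_sum, LinearEquiv.coe_coe, LinearMap.coe_proj,
        LinearMap.coe_single, Submodule.coe_subtype, Function.comp_apply, Finset.sum_apply,
        Function.eval, map_sum, LinearMap.id_comp]
      rw [Finset.sum_eq_single s (fun t _ hts => by simp [hts]) (by simp)]
      simp only [Pi.single_eq_same, decomposeLinearEquiv_apply_coe, lmap_lof, coeLinearMap_lof]
      rfl)
    (by
      refine linearMap_ext _ fun j => LinearMap.ext fun x => ?_
      have hx (t : σ) : (x : σ → A) t ∈ 𝒜 j := x.2 t trivial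
      simp only [LinearMap.coe_comp, LinearMap.coe_sum, LinearEquiv.coe_coe, LinearMap.coe_proj,
        Function.comp_apply, coeLinearMap_lof, Finset.sum_apply, Function.eval, LinearMap.id_comp]
      simp_rw [decomposeLinearEquiv_apply_coe 𝒜 j ⟨_, hx _⟩, lmap_lof, ← map_sum]
      congr 1
      ext t
      simp only [Submodule.coe_sum, Finset.sum_apply]
      change ∑ c, (Pi.single c ((x : σ → A) c) : σ → A) t = _
      simp [Pi.single_apply])

end PiGrading

section FiniteDimensional

variable {ι k A : Type*} [DivisionRing k] [AddCommGroup A] [Module k A]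
  (𝒜 : ι → Submodule k A) (σ : Type*) [Fintype σ] (j : ι) [FiniteDimensional k (𝒜 j)]

instance : FiniteDimensional k (piGrading 𝒜 σ j) :=
  (piGradingEquiv 𝒜 σ j).symm.finiteDimensional

lemma finrank_piGrading :
    finrank k (piGrading 𝒜 σ j) = Fintype.card σ * finrank k (𝒜 j) := by
  rw [(piGradingEquiv 𝒜 σ j).finrank_eq, finrank_pi_fintype, Finset.sum_const,
    Finset.card_univ, smul_eq_mul]

end FiniteDimensional

lemma finrank_add_finrank_eq_of_exact {k U V W : Type*} [DivisionRing k]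
    [AddCommGroup U] [Module k U] [AddCommGroup V] [Module k V] [FiniteDimensional k V]
    [AddCommGroup W] [Module k W] {f : U →ₗ[k] V} {g : V →ₗ[k] W}
    (hf : Function.Injective f) (hg : Function.Surjective g) (hfg : Function.Exact f g) :
    finrank k U + finrank k W = finrank k V := by
  rw [← g.finrank_range_add_finrank_ker, LinearMap.range_eq_top.mpr hg, finrank_top,
    hfg.linearMap_ker_eq, LinearMap.finrank_range_of_inj hf, add_comm]

section GradedMap

variable {ι k U V W : Type*} [Semiring k]
  [AddCommMonoid U] [Module k U] [AddCommMonoid V] [Module k V] [AddCommMonoid W] [Module k W]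
  {𝒰 : ι → Submodule k U} {𝒱 : ι → Submodule k V} {𝒲 : ι → Submodule k W}

def IsGradedMap [Add ι] (𝒱 : ι → Submodule k V) (𝒲 : ι → Submodule k W) (a : ι)
    (f : V →ₗ[k] W) : Prop :=
  ∀ ⦃i : ι⦄, ∀ x ∈ 𝒱 i, f x ∈ 𝒲 (i + a)

namespace IsGradedMap

variable [AddRightCancelMonoid ι] {a b : ι} {f : V →ₗ[k] W}

def restrict (hf : IsGradedMap 𝒱 𝒲 a f) {i j : ι} (hij : i + a = j) : 𝒱 i →ₗ[k] 𝒲 j :=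
  f.restrict fun x hx => hij ▸ hf x hx

@[simp]
lemma coe_restrict_apply (hf : IsGradedMap 𝒱 𝒲 a f) {i j : ι} (hij : i + a = j) (x : 𝒱 i) :
    (hf.restrict hij x : W) = f x :=
  rfl

variable [DecidableEq ι] [Decomposition 𝒱]

lemma coe_decompose_map [Decomposition 𝒲] (hf : IsGradedMap 𝒱 𝒲 a f) (x : V) (i : ι) :
    (decompose 𝒲 (f x) (i + a) : W) = f (decompose 𝒱 x i) := by
  induction x using Decomposition.inductionOn 𝒱 with
  | zero => simp
  | @homogeneous j x =>
    by_cases hji : j = i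
    · subst hji
      rw [decompose_of_mem_same _ (hf x x.2), decompose_of_mem_same _ x.2]
    · rw [decompose_of_mem_ne _ (hf x x.2) (by simpa using hji), decompose_of_mem_ne _ x.2 hji,
        map_zero]
  | add x y hx hy => simp [hx, hy]

lemma exists_mem_eq_of_mem_range [Decomposition 𝒲] (hf : IsGradedMap 𝒱 𝒲 a f) {i j : ι}
    (hij : i + a = j) {y : W} (hy : y ∈ 𝒲 j) (hyf : y ∈ Set.range f) : ∃ x ∈ 𝒱 i, f x = y := by
  obtain ⟨x, rfl⟩ := hyf
  subst hij
  exact ⟨decompose 𝒱 x i, SetLike.coe_mem _, by rw [← hf.coe_decompose_map,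
    decompose_of_mem_same _ hy]⟩

lemma surjective_restrict [Decomposition 𝒲] (hf : IsGradedMap 𝒱 𝒲 a f)
    (hsurj : Function.Surjective f) {i j : ι} (hij : i + a = j) :
    Function.Surjective (hf.restrict hij) := fun y => by
  obtain ⟨x, hx, hxy⟩ := hf.exists_mem_eq_of_mem_range hij y.2 (hsurj y)
  exact ⟨⟨x, hx⟩, Subtype.ext hxy⟩

lemma exact_restrict [Decomposition 𝒰] {e : U →ₗ[k] V} (he : IsGradedMap 𝒰 𝒱 a e)
    (hf : IsGradedMap 𝒱 𝒲 b f) (hef : Function.Exact e f) {i j l : ι} (hij : i + a = j)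
    (hjl : j + b = l) : Function.Exact (he.restrict hij) (hf.restrict hjl) := fun y => by
  rw [Subtype.ext_iff, coe_restrict_apply, Submodule.coe_zero, hef]
  constructor
  · intro hy
    obtain ⟨x, hx, hxy⟩ := he.exists_mem_eq_of_mem_range hij y.2 hy
    exact ⟨⟨x, hx⟩, Subtype.ext hxy⟩
  · rintro ⟨x, rfl⟩
    exact ⟨x, rfl⟩

end IsGradedMap

end GradedMap

section FreeModule

variable {ι k R M : Type*} [AddCommMonoid ι] [CommSemiring k] [CommSemiring R] [Algebra k R]
  [AddCommMonoid M] [Module R M] [Module k M] [IsScalarTower k R M]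
  {𝒜 : ι → Submodule k R} {ℳ : ι → Submodule k M} {σ τ : Type*} [Fintype σ] [DecidableEq σ]

lemma LinearMap.pi_apply_eq_sum_single {N : Type*} [AddCommMonoid N] [Module R N]
    (f : (σ → R) →ₗ[R] N) (x : σ → R) : f x = ∑ s, x s • f (Pi.single s 1) := by
  conv_lhs => rw [pi_eq_sum_univ' x, map_sum]
  simp only [map_smul]

lemma isGradedMap_of_single_apply_mem
    (hmul : ∀ ⦃i j : ι⦄ ⦃x y : R⦄, x ∈ 𝒜 i → y ∈ 𝒜 j → x * y ∈ 𝒜 (i + j))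
    (f : (σ → R) →ₗ[R] (τ → R)) {a : ι} (hf : ∀ s t, f (Pi.single s 1) t ∈ 𝒜 a) :
    IsGradedMap (piGrading 𝒜 σ) (piGrading 𝒜 τ) a (f.restrictScalars k) := fun i x hx t _ => by
  rw [LinearMap.restrictScalars_apply, f.pi_apply_eq_sum_single, Finset.sum_apply]
  exact Submodule.sum_mem _ fun s _ => hmul (hx s trivial) (hf s t)

lemma isGradedMap_of_single_mem
    (hsmul : ∀ ⦃i j : ι⦄ ⦃x : R⦄ ⦃m : M⦄, x ∈ 𝒜 i → m ∈ ℳ j → x • m ∈ ℳ (i + j))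
    (f : (σ → R) →ₗ[R] M) {a : ι} (hf : ∀ s, f (Pi.single s 1) ∈ ℳ a) :
    IsGradedMap (piGrading 𝒜 σ) ℳ a (f.restrictScalars k) := fun i x hx => by
  rw [LinearMap.restrictScalars_apply, f.pi_apply_eq_sum_single]
  exact Submodule.sum_mem _ fun s _ => hsmul (hx s trivial) (hf s)

end FreeModule

lemma Function.Exact.injective_of_subsingleton {k U V W : Type*} [Ring k]
    [AddCommGroup U] [Module k U] [AddCommGroup V] [Module k V] [AddCommGroup W] [Module k W]
    [Subsingleton U] {f : U →ₗ[k] V} {g : V →ₗ[k] W} (hfg : Function.Exact f g) :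
    Function.Injective g :=
  (LinearMap.injective_iff_eq_zero_of_exact hfg).mpr (Subsingleton.elim _ _)

lemma Function.Exact.surjective_of_subsingleton {k U V W : Type*} [Ring k]
    [AddCommGroup U] [Module k U] [AddCommGroup V] [Module k V] [AddCommGroup W] [Module k W]
    [Subsingleton W] {f : U →ₗ[k] V} {g : V →ₗ[k] W} (hfg : Function.Exact f g) :
    Function.Surjective f :=
  (LinearMap.surjective_iff_eq_zero_of_exact hfg).mpr (Subsingleton.elim _ _)

namespace IsStandardGraded

variable {k R : Type*} [Field k] [CommRing R] [Algebra k R] {𝒜 : ℤ → Submodule k R}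

lemma finrank_zero (hR : IsStandardGraded k R 𝒜) [Nontrivial R] : finrank k (𝒜 0) = 1 := by
  rw [hR.deg_zero]
  exact finrank_span_singleton one_ne_zero

lemma subsingleton_piGrading (hR : IsStandardGraded k R 𝒜) (σ : Type*) {i : ℤ} (hi : i < 0) :
    Subsingleton (piGrading 𝒜 σ i) :=
  Submodule.subsingleton_iff_eq_bot.mpr (piGrading_eq_bot (hR.bot_of_neg i hi))

end IsStandardGraded

namespace LinearResolution

variable {k R M : Type*} [Field k] [CommRing R] [Algebra k R]
  [AddCommGroup M] [Module R M] [Module k M] [IsScalarTower k R M]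
  {𝒜 : ℤ → Submodule k R} {ℳ : ℤ → Submodule k M} {d : ℤ} (F : LinearResolution k R 𝒜 M ℳ d)

/- `piGrading 𝒜 (Fin (F.β n)) j` is the component of degree `d + n + j` of the free module
`F_n = R(-d-n)^{β n}`. -/
lemma isGradedMap_dd (hR : IsStandardGraded k R 𝒜) (n : ℕ) :
    IsGradedMap (piGrading 𝒜 (Fin (F.β (n + 1)))) (piGrading 𝒜 (Fin (F.β n))) 1
      ((F.dd n).restrictScalars k) :=
  isGradedMap_of_single_apply_mem hR.mul_mem (F.dd n) (F.dd_linear n)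

lemma isGradedMap_aug (hM : IsGradedModule k R 𝒜 M ℳ) :
    IsGradedMap (piGrading 𝒜 (Fin (F.β 0))) ℳ d (F.aug.restrictScalars k) :=
  isGradedMap_of_single_mem hM.smul_mem F.aug F.aug_deg

variable [Decomposition 𝒜]

lemma injective_restrict_dd_zero (hR : IsStandardGraded k R 𝒜) (n : ℕ) :
    Function.Injective ((F.isGradedMap_dd hR n).restrict (zero_add 1)) :=
  have := hR.subsingleton_piGrading (Fin (F.β (n + 2))) (neg_one_lt_zero (R := ℤ))
  ((F.isGradedMap_dd hR (n + 1)).exact_restrict (F.isGradedMap_dd hR n) (F.exact_dd n)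
    (neg_add_cancel 1) (zero_add 1)).injective_of_subsingleton

lemma injective_restrict_aug_zero (hR : IsStandardGraded k R 𝒜)
    (hM : IsGradedModule k R 𝒜 M ℳ) :
    Function.Injective ((F.isGradedMap_aug hM).restrict (zero_add d)) :=
  have := hR.subsingleton_piGrading (Fin (F.β 1)) (neg_one_lt_zero (R := ℤ))
  ((F.isGradedMap_dd hR 0).exact_restrict (F.isGradedMap_aug hM) F.exact_aug
    (neg_add_cancel 1) (zero_add d)).injective_of_subsingleton

lemma surjective_restrict_dd_one (hR : IsStandardGraded k R 𝒜) (hM : IsGradedModule k R 𝒜 M ℳ)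
    (h𝒜 : 𝒜 3 = ⊥) (hℳ : ℳ (2 + d) = ⊥) (n : ℕ) :
    Function.Surjective ((F.isGradedMap_dd hR n).restrict one_add_one_eq_two) := by
  cases n with
  | zero =>
    have := Submodule.subsingleton_iff_eq_bot.mpr hℳ
    exact ((F.isGradedMap_dd hR 0).exact_restrict (F.isGradedMap_aug hM) F.exact_aug
      one_add_one_eq_two rfl).surjective_of_subsingleton
  | succ n =>
    have := Submodule.subsingleton_iff_eq_bot.mpr (piGrading_eq_bot (σ := Fin (F.β n)) h𝒜)
    exact ((F.isGradedMap_dd hR (n + 1)).exact_restrict (F.isGradedMap_dd hR n) (F.exact_dd n)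
      one_add_one_eq_two (by norm_num : (2 : ℤ) + 1 = 3)).surjective_of_subsingleton

lemma betti_zero (hR : IsStandardGraded k R 𝒜) (hM : IsGradedModule k R 𝒜 M ℳ)
    [Decomposition ℳ] [Nontrivial R] : F.β 0 = finrank k (ℳ d) := by
  have := hR.finite_dim 0
  have hsurj := (F.isGradedMap_aug hM).surjective_restrict F.aug_surjective (zero_add d)
  rw [← (LinearEquiv.ofBijective _ ⟨F.injective_restrict_aug_zero hR hM, hsurj⟩).finrank_eq,
    finrank_piGrading, Fintype.card_fin, hR.finrank_zero, mul_one]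

lemma betti_one (hR : IsStandardGraded k R 𝒜) (hM : IsGradedModule k R 𝒜 M ℳ)
    [Decomposition ℳ] [Nontrivial R] :
    finrank k (𝒜 1) * F.β 0 = F.β 1 + finrank k (ℳ (d + 1)) := by
  have := hR.finite_dim 0
  have := hR.finite_dim 1
  have h := finrank_add_finrank_eq_of_exact (F.injective_restrict_dd_zero hR 0)
    ((F.isGradedMap_aug hM).surjective_restrict F.aug_surjective (add_comm 1 d))
    ((F.isGradedMap_dd hR 0).exact_restrict (F.isGradedMap_aug hM) F.exact_aug _ _)
  rw [finrank_piGrading, finrank_piGrading, hR.finrank_zero, Fintype.card_fin,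
    Fintype.card_fin] at h
  linarith

lemma betti_recurrence (hR : IsStandardGraded k R 𝒜) (hM : IsGradedModule k R 𝒜 M ℳ)
    [Nontrivial R] (h𝒜 : 𝒜 3 = ⊥) (hℳ : ℳ (2 + d) = ⊥) (n : ℕ) :
    finrank k (𝒜 1) * F.β (n + 1) = F.β (n + 2) + finrank k (𝒜 2) * F.β n := by
  have := hR.finite_dim 0
  have := hR.finite_dim 1
  have := hR.finite_dim 2
  have h := finrank_add_finrank_eq_of_exact (F.injective_restrict_dd_zero hR (n + 1))
    (F.surjective_restrict_dd_one hR hM h𝒜 hℳ n)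
    ((F.isGradedMap_dd hR (n + 1)).exact_restrict (F.isGradedMap_dd hR n) (F.exact_dd n) _ _)
  simp only [finrank_piGrading, hR.finrank_zero, Fintype.card_fin] at h
  linarith

end LinearResolution

/-- With `γ = b 1 - u * b 0` the recurrence gives `b (n + 1) - u * b n = v ^ n * γ`; if `γ < 0`
this forces `b n ≤ v ^ n * (b 0 + n * γ / v)`, which is eventually negative. -/
lemma mul_le_of_nonneg_of_recurrence {u v : ℝ} (hu : 0 ≤ u) (huv : u ≤ v) {b : ℕ → ℝ}
    (hb : ∀ n, 0 ≤ b n) (hrec : ∀ n, b (n + 2) = (u + v) * b (n + 1) - u * v * b n) :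
    u * b 0 ≤ b 1 := by
  by_contra! hγ
  set γ := b 1 - u * b 0 with hγ_def
  replace hγ : γ < 0 := by linarith
  have hv : 0 < v := by
    by_contra! hv
    have hu0 : u = 0 := le_antisymm (huv.trans hv) hu
    linarith [hb 1, show γ = b 1 by simp [hγ_def, hu0]]
  have hgeom (n : ℕ) : b (n + 1) = u * b n + v ^ n * γ := by
    induction n with
    | zero => ring
    | succ n ih => rw [hrec, ih]; ring
  have hbound (n : ℕ) : b n ≤ v ^ n * (b 0 + n * (γ / v)) := by
    induction n with
    | zero => simp
    | succ n ih =>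
      calc b (n + 1) ≤ v * b n + v ^ n * γ := by
            rw [hgeom]; nlinarith [hb n]
        _ ≤ v * (v ^ n * (b 0 + n * (γ / v))) + v ^ n * γ := by gcongr
        _ = v ^ (n + 1) * (b 0 + (n + 1 : ℕ) * (γ / v)) := by
            field_simp
            push_cast
            ring
  obtain ⟨n, hn⟩ := exists_nat_gt (b 0 * v / -γ)
  have hneg : b 0 + n * (γ / v) < 0 := by
    rw [div_lt_iff₀ (neg_pos.mpr hγ)] at hn
    rw [mul_div_assoc', add_div' _ _ _ hv.ne', div_neg_iff]
    right
    exact ⟨by linarith, hv⟩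
  linarith [hb n, hbound n, mul_neg_of_pos_of_neg (pow_pos hv n) hneg]

lemma le_of_betti_recurrence {e r p q : ℕ} {β : ℕ → ℕ} (hdisc : 4 * r ≤ e ^ 2) (h0 : β 0 = p)
    (h1 : e * p = β 1 + q) (hrec : ∀ n, e * β (n + 1) = β (n + 2) + r * β n) :
    (q : ℝ) ≤ (e + √((e : ℝ) ^ 2 - 4 * r)) / 2 * p := by
  have hD : (0 : ℝ) ≤ (e : ℝ) ^ 2 - 4 * r := by
    rw [sub_nonneg]
    exact_mod_cast hdisc
  set s := √((e : ℝ) ^ 2 - 4 * r)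
  have hs0 : 0 ≤ s := Real.sqrt_nonneg _
  have hs : s ^ 2 = (e : ℝ) ^ 2 - 4 * r := Real.sq_sqrt hD
  have hse : s ≤ e := by nlinarith [Nat.cast_nonneg (α := ℝ) r]
  have hβ1 := mul_le_of_nonneg_of_recurrence (u := (e - s) / 2) (v := (e + s) / 2)
    (b := fun n => (β n : ℝ)) (by linarith) (by linarith)
    (fun n => Nat.cast_nonneg _) (fun n => by
      have : (e : ℝ) * β (n + 1) = β (n + 2) + r * β n := by exact_mod_cast hrec n
      linear_combination (-1 : ℝ) * this - (β n : ℝ) / 4 * hs)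
  simp only [h0] at hβ1
  have : (e : ℝ) * p = β 1 + q := by exact_mod_cast h1
  linarith

/-- For a short standard graded algebra with Hilbert series
`1 + e s + r s²` admitting a nonzero linear module `M` with Hilbert series
`p s^d + q s^{d+1}` (`p ≠ 0`), the Poincaré-series identity forces
`q ≤ v p` with `v = (e + √(e²−4r))/2`. -/
theorem stmt0 {k R M : Type*} [Field k] [CommRing R] [Algebra k R]
    [AddCommGroup M] [Module R M] [Module k M] [IsScalarTower k R M]
    (𝒜 : ℤ → Submodule k R) (ℳ : ℤ → Submodule k M)
    (hR : IsStandardGraded k R 𝒜) (hM : IsGradedModule k R 𝒜 M ℳ)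
    (e r : ℕ) (he : Module.finrank k (𝒜 1) = e) (hr : Module.finrank k (𝒜 2) = r)
    (hshort : ∀ i : ℤ, 3 ≤ i → 𝒜 i = ⊥)
    (hdisc : 4 * r ≤ e ^ 2)
    (d : ℤ) (p q : ℕ) (hp : p ≠ 0)
    (hMd : Module.finrank k (ℳ d) = p) (hMd1 : Module.finrank k (ℳ (d + 1)) = q)
    (hconc : ∀ j : ℤ, j ≠ d → j ≠ d + 1 → ℳ j = ⊥)
    (hlin : Nonempty (LinearResolution k R 𝒜 M ℳ d)) :
    (q : ℝ) ≤ (e + Real.sqrt ((e : ℝ) ^ 2 - 4 * r)) / 2 * p := by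
  obtain ⟨F⟩ := hlin
  let _ : Decomposition 𝒜 := hR.internal.chooseDecomposition
  let _ : Decomposition ℳ := hM.internal.chooseDecomposition
  have : Nontrivial M := by
    have := Module.nontrivial_of_finrank_pos (hMd ▸ Nat.pos_of_ne_zero hp)
    obtain ⟨x, hx⟩ := exists_ne (0 : ℳ d)
    exact nontrivial_of_ne (x : M) 0 (by simpa using hx)
  have : Nontrivial R := Module.nontrivial R M
  have hβ0 : F.β 0 = p := hMd ▸ F.betti_zero hR hM
  refine le_of_betti_recurrence hdisc hβ0 ?_ fun n => ?_
  · rw [← he, ← hMd1, ← hβ0]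
    exact F.betti_one hR hM
  · rw [← he, ← hr]
    exact F.betti_recurrence hR hM (hshort 3 le_rfl) (hconc _ (by omega) (by omega)) n
end

section
/- Let e, r be nonnegative integers with e² > 4r, let u = (e−√(e²−4r))/2 and v = (e+√(e²−4r))/2, and let p, q be nonnegative integers with p ≥ 1. Suppose the formal power series (p − qt)/((1−ut)(1−vt)) = Σ c_i t^i has all coefficients c_i ≥ 0 (in ℝ). Then q ≤ vp; moreover, if q = vp then u and v are integers and (p − qt)/((1−ut)(1−vt)) = p/(1−ut). -/
/-!
Partial fractions give `c n = a * u ^ n + b * v ^ n` with `b = (v * p - q) / (v - u)`. Since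
`|u| < v`, `c n / v ^ n → b`, so nonnegativity of the coefficients forces `b ≥ 0`. If `q = v * p`
then `p - q t = p (1 - v t)` and the factor `1 - v t` cancels; moreover `v = q / p` is a rational
root of the monic integer polynomial `t ^ 2 - e t + r`, hence an integer, and so is `u = e - v`.
-/

open PowerSeries Filter

namespace PowerSeries

variable {R : Type*} [CommRing R]

theorem mk_pow_mul_one_sub_C_mul_X (a : R) : mk (a ^ ·) * (1 - C a * X) = 1 := by
  have h := congrArg (rescale a) (mk_one_mul_one_sub_eq_one R)
  rw [map_mul, map_sub, map_one, rescale_X] at h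
  convert h using 2
  ext n
  simp [coeff_rescale]

theorem mk_add_pow_mul_one_sub_mul_one_sub (a b u v : R) :
    mk (fun n => a * u ^ n + b * v ^ n) * ((1 - C u * X) * (1 - C v * X)) =
      C (a + b) - C (a * v + b * u) * X := by
  have hsplit : mk (fun n => a * u ^ n + b * v ^ n) = C a * mk (u ^ ·) + C b * mk (v ^ ·) := by
    ext n; simp
  calc _ = C a * (mk (u ^ ·) * (1 - C u * X)) * (1 - C v * X)
        + C b * (mk (v ^ ·) * (1 - C v * X)) * (1 - C u * X) := by rw [hsplit]; ring
    _ = _ := by simp only [mk_pow_mul_one_sub_C_mul_X, map_add, map_mul]; ring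

theorem one_sub_C_mul_X_ne_zero [Nontrivial R] (a : R) : (1 - C a * X : R⟦X⟧) ≠ 0 :=
  fun h => by simpa using congrArg constantCoeff h

variable {k : Type*} [Field k]

theorem coeff_eq_of_mk_mul_one_sub_mul_one_sub {u v p q : k} (huv : u ≠ v) {c : ℕ → k}
    (hc : mk c * ((1 - C u * X) * (1 - C v * X)) = C p - C q * X) (n : ℕ) :
    c n = (q - u * p) / (v - u) * u ^ n + (v * p - q) / (v - u) * v ^ n := by
  have hvu : v - u ≠ 0 := sub_ne_zero.mpr huv.symm
  have hG := mul_ne_zero (one_sub_C_mul_X_ne_zero u) (one_sub_C_mul_X_ne_zero v)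
  have hsol :=
    mk_add_pow_mul_one_sub_mul_one_sub ((q - u * p) / (v - u)) ((v * p - q) / (v - u)) u v
  have hp : (q - u * p) / (v - u) + (v * p - q) / (v - u) = p := by field_simp; ring
  have hq : (q - u * p) / (v - u) * v + (v * p - q) / (v - u) * u = q := by field_simp; ring
  rw [hp, hq] at hsol
  simpa using congrArg (coeff n) (mul_right_cancel₀ hG (hc.trans hsol.symm))

end PowerSeries

theorem nonneg_of_forall_nonneg_mul_pow_add_mul_pow {a b u v : ℝ} (huv : |u| < v)
    (h : ∀ n, 0 ≤ a * u ^ n + b * v ^ n) : 0 ≤ b := by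
  have hv : 0 < v := (abs_nonneg u).trans_lt huv
  have hlim : Tendsto (fun n => (a * u ^ n + b * v ^ n) / v ^ n) atTop (nhds b) := by
    have hratio : Tendsto (fun n => (u / v) ^ n) atTop (nhds 0) :=
      tendsto_pow_atTop_nhds_zero_of_abs_lt_one <| by
        rwa [abs_div, abs_of_pos hv, div_lt_one hv]
    convert (hratio.const_mul a).add_const b using 2 with n
    · rw [div_pow]; field_simp
    · simp
  exact ge_of_tendsto' hlim fun n => div_nonneg (h n) (pow_nonneg hv.le n)

theorem Rat.exists_intCast_eq_of_sq_sub_mul_add_eq_zero {x : ℚ} (e r : ℤ)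
    (hx : x ^ 2 - e * x + r = 0) : ∃ m : ℤ, x = m := by
  have hint : IsIntegral ℤ x := by
    refine ⟨Polynomial.X ^ 2 - Polynomial.C e * Polynomial.X + Polynomial.C r, ?_, ?_⟩
    · monicity!
    · simpa only [Polynomial.eval₂_add, Polynomial.eval₂_sub, Polynomial.eval₂_mul,
        Polynomial.eval₂_C, Polynomial.eval₂_X, Polynomial.eval₂_X_pow, algebraMap_int_eq,
        Int.coe_castRingHom] using hx
  obtain ⟨m, hm⟩ := IsIntegrallyClosed.isIntegral_iff.mp hint
  exact ⟨m, by simpa using hm.symm⟩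

/-- numerical content of Corollary 1.6. If `e² > 4r`,
`u = (e−√(e²−4r))/2`, `v = (e+√(e²−4r))/2`, `p ≥ 1`, and the power series
`Σ c_i t^i = (p − q t)/((1−ut)(1−vt))` has all coefficients `c_i ≥ 0`, then
`q ≤ v p`; and if `q = v p` then `u, v ∈ ℤ` and the series equals `p/(1−ut)`. -/
theorem stmt1 (e r p q : ℕ) (he : 4 * r < e ^ 2) (hp : 1 ≤ p)
    (u v : ℝ) (hu : u = ((e : ℝ) - Real.sqrt ((e : ℝ) ^ 2 - 4 * r)) / 2)
    (hv : v = ((e : ℝ) + Real.sqrt ((e : ℝ) ^ 2 - 4 * r)) / 2)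
    (c : ℕ → ℝ)
    (hc : (PowerSeries.mk c) *
        ((1 - PowerSeries.C u * PowerSeries.X) * (1 - PowerSeries.C v * PowerSeries.X)) =
      PowerSeries.C (p : ℝ) - PowerSeries.C (q : ℝ) * PowerSeries.X)
    (hnn : ∀ i, 0 ≤ c i) :
    (q : ℝ) ≤ v * p ∧
      ((q : ℝ) = v * p →
        (∃ m : ℤ, u = (m : ℝ)) ∧ (∃ n : ℤ, v = (n : ℝ)) ∧
        (PowerSeries.mk c) * (1 - PowerSeries.C u * PowerSeries.X) =
          PowerSeries.C (p : ℝ)) := by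
  have hdisc : (0 : ℝ) < (e : ℝ) ^ 2 - 4 * r := by
    rw [sub_pos]; exact_mod_cast he
  have he0 : (0 : ℝ) < e := Nat.cast_pos.mpr (by nlinarith)
  have hsqrt := Real.sqrt_pos.mpr hdisc
  have hsum : u + v = e := by rw [hu, hv]; ring
  have hprod : u * v = r := by
    rw [hu, hv]; linear_combination (-1 / 4 : ℝ) * Real.sq_sqrt hdisc.le
  have hvu : 0 < v - u := by rw [hu, hv]; linarith
  have habs : |u| < v := abs_lt.mpr ⟨by linarith, by linarith⟩
  have hcoeff := coeff_eq_of_mk_mul_one_sub_mul_one_sub (sub_pos.mp hvu).ne hc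
  have hb := nonneg_of_forall_nonneg_mul_pow_add_mul_pow habs fun n => hcoeff n ▸ hnn n
  refine ⟨by linarith [(le_div_iff₀ hvu).mp hb], fun hq => ?_⟩
  have hp0 : (p : ℝ) ≠ 0 := Nat.cast_ne_zero.mpr (Nat.one_le_iff_ne_zero.mp hp)
  have hvq : v = ((q / p : ℚ) : ℝ) := by push_cast; field_simp; linarith
  have hroot : v ^ 2 - e * v + r = 0 := by rw [← hsum, ← hprod]; ring
  obtain ⟨m, hm⟩ := Rat.exists_intCast_eq_of_sq_sub_mul_add_eq_zero (x := q / p) e r <| by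
    rw [hvq] at hroot; exact_mod_cast hroot
  have hvm : v = m := by rw [hvq, hm]; push_cast; rfl
  refine ⟨⟨e - m, by push_cast; linarith⟩, ⟨m, hvm⟩, ?_⟩
  refine mul_right_cancel₀ (one_sub_C_mul_X_ne_zero v) ?_
  rw [mul_assoc, hc, hq, map_mul]
  ring
end

section
/- Let R be a standard graded k-algebra with dim_k R_1 = e ≥ 1 and let M be a nonzero finitely generated graded R-module with indeg M = d, such that M_j = 0 for j ≠ d, d+1 and P^R_M(s,t) = p s^d/(1 − st) (i.e., M is linear with all Betti numbers equal to p). Then H_R(s) = (1+s)(1+(e−1)s) and H_M(s) = p s^d (1+(e−1)s). -/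
namespace Stmt5Aux

open DirectSum




section Proj
variable {k : Type*} [Field k] {N : Type*} [AddCommGroup N] [Module k N]
variable (𝒩 : ℤ → Submodule k N)

/-- projection onto the degree-`c` component of an internal direct sum -/
noncomputable def proj (hi : DirectSum.IsInternal 𝒩) (c : ℤ) : N →ₗ[k] N :=
  (𝒩 c).subtype ∘ₗ (DirectSum.component k ℤ (fun i => ↥(𝒩 i)) c) ∘ₗ
    (LinearEquiv.ofBijective (DirectSum.coeLinearMap 𝒩) hi).symm.toLinearMap

variable (hi : DirectSum.IsInternal 𝒩)

lemma proj_mem (c : ℤ) (x : N) : proj 𝒩 hi c x ∈ 𝒩 c := by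
  simp only [proj, LinearMap.comp_apply]
  exact Submodule.coe_mem _

lemma proj_of_mem {c : ℤ} {x : N} (hx : x ∈ 𝒩 c) : proj 𝒩 hi c x = x := by
  simp only [proj, LinearMap.comp_apply, LinearEquiv.coe_coe]
  rw [show (DirectSum.component k ℤ (fun i => ↥(𝒩 i)) c)
      ((LinearEquiv.ofBijective (DirectSum.coeLinearMap 𝒩) hi).symm x)
      = (LinearEquiv.ofBijective (DirectSum.coeLinearMap 𝒩) hi).symm x c from rfl,
    hi.ofBijective_coeLinearMap_of_mem hx]
  rfl

lemma proj_of_mem_ne {c c' : ℤ} {x : N} (hx : x ∈ 𝒩 c) (hne : c ≠ c') :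
    proj 𝒩 hi c' x = 0 := by
  simp only [proj, LinearMap.comp_apply, LinearEquiv.coe_coe]
  rw [show (DirectSum.component k ℤ (fun i => ↥(𝒩 i)) c')
      ((LinearEquiv.ofBijective (DirectSum.coeLinearMap 𝒩) hi).symm x)
      = (LinearEquiv.ofBijective (DirectSum.coeLinearMap 𝒩) hi).symm x c' from rfl,
    hi.ofBijective_coeLinearMap_of_mem_ne hne hx]
  simp

lemma exists_finset (x : N) :
    ∃ S : Finset ℤ, (∀ c ∉ S, proj 𝒩 hi c x = 0) ∧ ∑ c ∈ S, proj 𝒩 hi c x = x := by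
  classical
  set E := LinearEquiv.ofBijective (DirectSum.coeLinearMap 𝒩) hi with hE
  refine ⟨(E.symm x).support, fun c hc => ?_, ?_⟩
  · simp only [proj, LinearMap.comp_apply, LinearEquiv.coe_coe]
    rw [show (DirectSum.component k ℤ (fun i => ↥(𝒩 i)) c) (E.symm x) = E.symm x c from rfl]
    rw [DFinsupp.notMem_support_iff.mp hc]
    simp
  · have key : ∀ c, proj 𝒩 hi c x = ((E.symm x) c : N) := fun c => rfl
    simp only [key]
    have : ∑ c ∈ (E.symm x).support, ((E.symm x) c : N)
        = DirectSum.coeLinearMap 𝒩 (∑ c ∈ (E.symm x).support,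
            DirectSum.of (fun i => ↥(𝒩 i)) c ((E.symm x) c)) := by
      rw [map_sum]
      simp only [DirectSum.coeLinearMap_of]
    rw [this, DirectSum.sum_support_of (E.symm x)]
    exact E.apply_symm_apply x

end Proj




section Maps
variable {k : Type*} [Field k] {R : Type*} [CommRing R] [Algebra k R]
variable {M : Type*} [AddCommGroup M] [Module R M] [Module k M] [IsScalarTower k R M]
variable (𝒜 : ℤ → Submodule k R) (ℳ : ℤ → Submodule k M)

lemma pi_decomp {a : ℕ} (x : Fin a → R) :
    x = ∑ i, (x i) • (Pi.single i 1 : Fin a → R) := by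
  funext j
  simp only [Finset.sum_apply, Pi.smul_apply, Pi.single_apply, smul_eq_mul, mul_ite,
    mul_one, mul_zero]
  rw [Finset.sum_ite_eq Finset.univ j (fun i => x i)]
  simp

lemma map_mem (hmul : ∀ ⦃i j : ℤ⦄ ⦃x y : R⦄, x ∈ 𝒜 i → y ∈ 𝒜 j → x * y ∈ 𝒜 (i + j)) {a b : ℕ} (f : (Fin a → R) →ₗ[R] (Fin b → R))
    (hf : ∀ i j, f (Pi.single i 1) j ∈ 𝒜 1) {c : ℤ} (x : Fin a → R)
    (hx : ∀ i, x i ∈ 𝒜 c) (j : Fin b) : f x j ∈ 𝒜 (c + 1) := by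
  rw [pi_decomp x, map_sum]
  simp only [map_smul, Finset.sum_apply, Pi.smul_apply, smul_eq_mul]
  exact Submodule.sum_mem _ fun i _ => hmul (hx i) (hf i j)

lemma aug_mem (hsmul : ∀ ⦃i j : ℤ⦄ ⦃x : R⦄ ⦃m : M⦄, x ∈ 𝒜 i → m ∈ ℳ j → x • m ∈ ℳ (i + j)) {d : ℤ} {a : ℕ} (g : (Fin a → R) →ₗ[R] M)
    (hg : ∀ i, g (Pi.single i 1) ∈ ℳ d) {c : ℤ} (x : Fin a → R)
    (hx : ∀ i, x i ∈ 𝒜 c) : g x ∈ ℳ (c + d) := by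
  rw [pi_decomp x, map_sum]
  simp only [map_smul]
  exact Submodule.sum_mem _ fun i _ => hsmul (hx i) (hg i)

/-- restriction of a degree-one matrix map to graded pieces -/
noncomputable def resMap (hmul : ∀ ⦃i j : ℤ⦄ ⦃x y : R⦄, x ∈ 𝒜 i → y ∈ 𝒜 j → x * y ∈ 𝒜 (i + j)) {a b : ℕ} (f : (Fin a → R) →ₗ[R] (Fin b → R))
    (hf : ∀ i j, f (Pi.single i 1) j ∈ 𝒜 1) (c c' : ℤ) (hcc : c' = c + 1) :
    (Fin a → ↥(𝒜 c)) →ₗ[k] (Fin b → ↥(𝒜 c')) where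
  toFun x := fun j => ⟨f (fun i => (x i : R)) j,
    hcc ▸ map_mem 𝒜 hmul f hf _ (fun i => (x i).2) j⟩
  map_add' x y := by
    funext j
    ext
    exact congrFun (map_add f (fun i => (x i : R)) (fun i => (y i : R))) j
  map_smul' t x := by
    funext j
    ext
    show f (fun i => ((t • x) i : R)) j = t • (f (fun i => (x i : R)) j)
    have h1 : (fun i => ((t • x) i : R)) = (algebraMap k R t) • (fun i => (x i : R)) := by
      funext i; simp [Algebra.smul_def]
    rw [h1, map_smul]
    simp [Algebra.smul_def]

lemma resMap_coe (hmul : ∀ ⦃i j : ℤ⦄ ⦃x y : R⦄, x ∈ 𝒜 i → y ∈ 𝒜 j → x * y ∈ 𝒜 (i + j)) {a b : ℕ} (f : (Fin a → R) →ₗ[R] (Fin b → R))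
    (hf : ∀ i j, f (Pi.single i 1) j ∈ 𝒜 1) (c c' : ℤ) (hcc : c' = c + 1)
    (x : Fin a → ↥(𝒜 c)) (j : Fin b) :
    (resMap 𝒜 hmul f hf c c' hcc x j : R) = f (fun i => (x i : R)) j := rfl

/-- restriction of the augmentation to a graded piece -/
noncomputable def gres {a : ℕ} (g : (Fin a → R) →ₗ[R] M) (c : ℤ) :
    (Fin a → ↥(𝒜 c)) →ₗ[k] M where
  toFun x := g (fun i => (x i : R))
  map_add' x y :=
    map_add g (fun i => (x i : R)) (fun i => (y i : R))
  map_smul' t x := by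
    show g (fun i => ((t • x) i : R)) = t • g (fun i => (x i : R))
    have h1 : (fun i => ((t • x) i : R)) = (algebraMap k R t) • (fun i => (x i : R)) := by
      funext i; simp [Algebra.smul_def]
    rw [h1, map_smul, algebraMap_smul]

end Maps


section Commute
variable {k : Type*} [Field k] {R : Type*} [CommRing R] [Algebra k R]
variable {M : Type*} [AddCommGroup M] [Module R M] [Module k M] [IsScalarTower k R M]
variable (𝒜 : ℤ → Submodule k R) (ℳ : ℤ → Submodule k M)

lemma proj_map (hi : DirectSum.IsInternal 𝒜)
    (hmul : ∀ ⦃i j : ℤ⦄ ⦃x y : R⦄, x ∈ 𝒜 i → y ∈ 𝒜 j → x * y ∈ 𝒜 (i + j))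
    {a b : ℕ} (f : (Fin a → R) →ₗ[R] (Fin b → R))
    (hf : ∀ i j, f (Pi.single i 1) j ∈ 𝒜 1) (y : Fin a → R) (c : ℤ) (j : Fin b) :
    proj 𝒜 hi (c + 1) (f y j) = f (fun i => proj 𝒜 hi c (y i)) j := by
  classical
  choose S hS0 hS1 using fun i => exists_finset 𝒜 hi (y i)
  set T : Finset ℤ := (Finset.univ.biUnion S) ∪ {c} with hT
  have hcT : c ∈ T := Finset.mem_union_right _ (Finset.mem_singleton_self c)
  have hy2 : y = ∑ c' ∈ T, (fun i => proj 𝒜 hi c' (y i)) := by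
    funext i
    rw [Finset.sum_apply]
    conv_lhs => rw [← hS1 i]
    refine Finset.sum_subset ?_ (fun c' _ h2 => hS0 i c' h2)
    exact (Finset.subset_biUnion_of_mem S (Finset.mem_univ i)).trans
      Finset.subset_union_left
  calc proj 𝒜 hi (c+1) (f y j)
      = ∑ c' ∈ T, proj 𝒜 hi (c+1) (f (fun i => proj 𝒜 hi c' (y i)) j) := by
        conv_lhs => rw [hy2]
        rw [map_sum f, Finset.sum_apply, map_sum]
    _ = f (fun i => proj 𝒜 hi c (y i)) j := by
        rw [Finset.sum_eq_single_of_mem c hcT]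
        · exact proj_of_mem 𝒜 hi
            (map_mem 𝒜 hmul f hf _ (fun i => proj_mem 𝒜 hi c (y i)) j)
        · intro b' _ hne
          exact proj_of_mem_ne 𝒜 hi
            (map_mem 𝒜 hmul f hf _ (fun i => proj_mem 𝒜 hi b' (y i)) j) (by omega)

lemma proj_aug (hi : DirectSum.IsInternal 𝒜) (him : DirectSum.IsInternal ℳ)
    (hsmul : ∀ ⦃i j : ℤ⦄ ⦃x : R⦄ ⦃m : M⦄, x ∈ 𝒜 i → m ∈ ℳ j → x • m ∈ ℳ (i + j))
    {d : ℤ} {a : ℕ} (g : (Fin a → R) →ₗ[R] M)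
    (hg : ∀ i, g (Pi.single i 1) ∈ ℳ d) (y : Fin a → R) (c : ℤ) :
    proj ℳ him (c + d) (g y) = g (fun i => proj 𝒜 hi c (y i)) := by
  classical
  choose S hS0 hS1 using fun i => exists_finset 𝒜 hi (y i)
  set T : Finset ℤ := (Finset.univ.biUnion S) ∪ {c} with hT
  have hcT : c ∈ T := Finset.mem_union_right _ (Finset.mem_singleton_self c)
  have hy2 : y = ∑ c' ∈ T, (fun i => proj 𝒜 hi c' (y i)) := by
    funext i
    rw [Finset.sum_apply]
    conv_lhs => rw [← hS1 i]
    refine Finset.sum_subset ?_ (fun c' _ h2 => hS0 i c' h2)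
    exact (Finset.subset_biUnion_of_mem S (Finset.mem_univ i)).trans
      Finset.subset_union_left
  calc proj ℳ him (c+d) (g y)
      = ∑ c' ∈ T, proj ℳ him (c+d) (g (fun i => proj 𝒜 hi c' (y i))) := by
        conv_lhs => rw [hy2]
        rw [map_sum g, map_sum]
    _ = g (fun i => proj 𝒜 hi c (y i)) := by
        rw [Finset.sum_eq_single_of_mem c hcT]
        · exact proj_of_mem ℳ him
            (aug_mem 𝒜 ℳ hsmul g hg _ (fun i => proj_mem 𝒜 hi c (y i)))
        · intro b' _ hne
          exact proj_of_mem_ne ℳ him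
            (aug_mem 𝒜 ℳ hsmul g hg _ (fun i => proj_mem 𝒜 hi b' (y i))) (by omega)

end Commute

end Stmt5Aux

/-- Theorem I.1, second part / Theorem 4.1(1): if `M` is a nonzero
short graded module (`M_j = 0` for `j ≠ d, d+1`) with a linear resolution whose
Betti numbers are all equal to `p` (i.e. `P^R_M(s,t) = p s^d/(1−st)`), then
`H_R(s) = (1+s)(1+(e−1)s) = 1 + e s + (e−1)s²` and `H_M(s) = p s^d (1+(e−1)s)`. -/
theorem stmt5 {k R M : Type*} [Field k] [CommRing R] [Algebra k R]
    [AddCommGroup M] [Module R M] [Module k M] [IsScalarTower k R M]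
    (𝒜 : ℤ → Submodule k R) (ℳ : ℤ → Submodule k M)
    (hR : IsStandardGraded k R 𝒜) (hM : IsGradedModule k R 𝒜 M ℳ)
    (e : ℕ) (he : Module.finrank k (𝒜 1) = e) (he1 : 1 ≤ e)
    (d : ℤ) (p : ℕ) (hp : 1 ≤ p)
    (hm : ∃ m : M, m ≠ 0)
    (hconc : ∀ j : ℤ, j ≠ d → j ≠ d + 1 → ℳ j = ⊥)
    (L : LinearResolution k R 𝒜 M ℳ d) (hβ : ∀ n : ℕ, L.β n = p) :
    Module.finrank k (𝒜 0) = 1 ∧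
    Module.finrank k (𝒜 2) = e - 1 ∧
    (∀ j : ℤ, 3 ≤ j → 𝒜 j = ⊥) ∧
    Module.finrank k (ℳ d) = p ∧
    Module.finrank k (ℳ (d + 1)) = (e - 1) * p := by
  classical
  obtain ⟨m0, hm0⟩ := hm
  have hR1 : (1 : R) ≠ 0 := by
    intro h
    apply hm0
    calc m0 = (1 : R) • m0 := (one_smul R m0).symm
      _ = (0 : R) • m0 := by rw [h]
      _ = 0 := zero_smul R m0
  have hfdA : ∀ c : ℤ, FiniteDimensional k (𝒜 c) := hR.finite_dim
  have h0 : Module.finrank k (𝒜 0) = 1 := by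
    rw [hR.deg_zero]
    exact finrank_span_singleton hR1
  have hneg : ∀ c : ℤ, c < 0 → Module.finrank k (𝒜 c) = 0 := by
    intro c hc
    rw [hR.bot_of_neg c hc]
    exact finrank_bot k R
  -- restricted maps
  let D : ∀ (n : ℕ) (c : ℤ), (Fin (L.β (n+1)) → ↥(𝒜 c)) →ₗ[k] (Fin (L.β n) → ↥(𝒜 (c+1))) :=
    fun n c => Stmt5Aux.resMap 𝒜 hR.mul_mem (L.dd n) (L.dd_linear n) c (c+1) rfl
  let A : ∀ c : ℤ, (Fin (L.β 0) → ↥(𝒜 c)) →ₗ[k] M := fun c => Stmt5Aux.gres 𝒜 L.aug c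
  have dimV : ∀ (n : ℕ) (c : ℤ),
      Module.finrank k (Fin (L.β n) → ↥(𝒜 c)) = p * Module.finrank k (𝒜 c) := by
    intro n c
    haveI := hfdA c
    rw [Module.finrank_pi_fintype, Finset.sum_const, Finset.card_univ, Fintype.card_fin,
      hβ n, smul_eq_mul]
  -- graded exactness
  have EXd : ∀ (n : ℕ) (c : ℤ),
      LinearMap.ker (D n (c+1)) = LinearMap.range (D (n+1) c) := by
    intro n c
    ext x
    simp only [LinearMap.mem_ker, LinearMap.mem_range]
    constructor
    · intro hx
      have hx' : L.dd n (fun i => (x i : R)) = 0 := by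
        funext j
        have h1 := congrFun hx j
        exact congrArg Subtype.val h1
      obtain ⟨y, hy⟩ := (L.exact_dd n _).mp hx'
      refine ⟨fun i => ⟨Stmt5Aux.proj 𝒜 hR.internal c (y i),
        Stmt5Aux.proj_mem 𝒜 hR.internal c (y i)⟩, ?_⟩
      funext j
      ext
      show L.dd (n+1) (fun i => Stmt5Aux.proj 𝒜 hR.internal c (y i)) j = (x j : R)
      rw [← Stmt5Aux.proj_map 𝒜 hR.internal hR.mul_mem (L.dd (n+1))
        (L.dd_linear (n+1)) y c j, hy]
      exact Stmt5Aux.proj_of_mem 𝒜 hR.internal (x j).2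
    · rintro ⟨z, rfl⟩
      funext j
      ext
      show L.dd n (fun i => ((D (n+1) c z) i : R)) j = (0 : R)
      have hc : (fun i => ((D (n+1) c z) i : R)) = L.dd (n+1) (fun i => (z i : R)) := by
        funext i; rfl
      rw [hc]
      have h2 : L.dd n (L.dd (n+1) (fun i => (z i : R))) = 0 :=
        (L.exact_dd n _).mpr ⟨_, rfl⟩
      exact congrFun h2 j
  have EXa : ∀ c : ℤ, LinearMap.ker (A (c+1)) = LinearMap.range (D 0 c) := by
    intro c
    ext x
    simp only [LinearMap.mem_ker, LinearMap.mem_range]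
    constructor
    · intro hx
      have hx' : L.aug (fun i => (x i : R)) = 0 := hx
      obtain ⟨y, hy⟩ := (L.exact_aug _).mp hx'
      refine ⟨fun i => ⟨Stmt5Aux.proj 𝒜 hR.internal c (y i),
        Stmt5Aux.proj_mem 𝒜 hR.internal c (y i)⟩, ?_⟩
      funext j
      ext
      show L.dd 0 (fun i => Stmt5Aux.proj 𝒜 hR.internal c (y i)) j = (x j : R)
      rw [← Stmt5Aux.proj_map 𝒜 hR.internal hR.mul_mem (L.dd 0)
        (L.dd_linear 0) y c j, hy]
      exact Stmt5Aux.proj_of_mem 𝒜 hR.internal (x j).2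
    · rintro ⟨z, rfl⟩
      show L.aug (fun i => ((D 0 c z) i : R)) = 0
      have hc : (fun i => ((D 0 c z) i : R)) = L.dd 0 (fun i => (z i : R)) := by
        funext i; rfl
      rw [hc]
      exact (L.exact_aug _).mpr ⟨_, rfl⟩
  have RA : ∀ (c c' : ℤ), c' = c + d → LinearMap.range (A c) = ℳ c' := by
    intro c c' hcc
    subst hcc
    apply le_antisymm
    · rintro _ ⟨x, rfl⟩
      exact Stmt5Aux.aug_mem 𝒜 ℳ hM.smul_mem L.aug L.aug_deg _ (fun i => (x i).2)
    · intro m hmem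
      obtain ⟨y, hy⟩ := L.aug_surjective m
      refine ⟨fun i => ⟨Stmt5Aux.proj 𝒜 hR.internal c (y i),
        Stmt5Aux.proj_mem 𝒜 hR.internal c (y i)⟩, ?_⟩
      show L.aug (fun i => Stmt5Aux.proj 𝒜 hR.internal c (y i)) = m
      rw [← Stmt5Aux.proj_aug 𝒜 ℳ hR.internal hM.internal hM.smul_mem L.aug
        L.aug_deg y c, hy]
      exact Stmt5Aux.proj_of_mem ℳ hM.internal hmem
  -- numerical relations
  have REL : ∀ (n : ℕ) (c c1 : ℤ), c1 = c + 1 →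
      p * Module.finrank k (𝒜 c1) =
      Module.finrank k (LinearMap.range (D n c1)) +
      Module.finrank k (LinearMap.range (D (n+1) c)) := by
    intro n c c1 h1
    subst h1
    haveI := hfdA (c+1)
    have h := LinearMap.finrank_range_add_finrank_ker (D n (c+1))
    rw [EXd n c, dimV (n+1) (c+1)] at h
    exact h.symm
  have RELa : ∀ (c c1 j : ℤ), c1 = c + 1 → j = c1 + d →
      p * Module.finrank k (𝒜 c1) =
      Module.finrank k (ℳ j) + Module.finrank k (LinearMap.range (D 0 c)) := by
    intro c c1 j h1 hj
    subst h1
    haveI := hfdA (c+1)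
    have h := LinearMap.finrank_range_add_finrank_ker (A (c+1))
    rw [EXa c, RA (c+1) j (by omega), dimV 0 (c+1)] at h
    exact h.symm
  have Qneg : ∀ (n : ℕ) (c : ℤ), c < 0 →
      Module.finrank k (LinearMap.range (D n c)) = 0 := by
    intro n c hc
    haveI := hfdA c
    have h := LinearMap.finrank_range_le (D n c)
    rw [dimV (n+1) c, hneg c hc, Nat.mul_zero] at h
    omega
  have Qn0 : ∀ (n : ℕ) (c : ℤ), c = 0 →
      Module.finrank k (LinearMap.range (D n c)) = p := by
    intro n c hc
    subst hc
    have h := REL n (-1) 0 (by norm_num)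
    rw [h0, Nat.mul_one, Qneg (n+1) (-1) (by norm_num)] at h
    omega
  have Qn1 : ∀ (n : ℕ) (c : ℤ), c = 1 →
      Module.finrank k (LinearMap.range (D n c)) + p = p * e := by
    intro n c hc
    subst hc
    have h := REL n 0 1 (by norm_num)
    rw [he, Qn0 (n+1) 0 rfl] at h
    omega
  have md : Module.finrank k (ℳ d) = p := by
    have h := RELa (-1) 0 d (by norm_num) (by omega)
    rw [h0, Nat.mul_one, Qneg 0 (-1) (by norm_num)] at h
    omega
  have hpe : p * e = p * (e - 1) + p := by
    obtain ⟨e', rfl⟩ : ∃ e', e = e' + 1 := ⟨e - 1, by omega⟩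
    rw [Nat.mul_succ]
    simp
  have md1 : Module.finrank k (ℳ (d + 1)) = (e - 1) * p := by
    have h := RELa 0 1 (d+1) (by norm_num) (by omega)
    rw [he, Qn0 0 0 rfl] at h
    have hcomm : (e - 1) * p = p * (e - 1) := Nat.mul_comm _ _
    omega
  have h2 : Module.finrank k (𝒜 2) = e - 1 := by
    have h := RELa 1 2 (d+2) (by norm_num) (by omega)
    rw [hconc (d+2) (by omega) (by omega), finrank_bot, Nat.zero_add] at h
    have h3 := Qn1 0 1 rfl
    have h4 : p * Module.finrank k (𝒜 2) = p * (e - 1) := by omega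
    exact Nat.eq_of_mul_eq_mul_left (by omega) h4
  have Qn2 : ∀ (n : ℕ) (c : ℤ), c = 2 →
      Module.finrank k (LinearMap.range (D n c)) = 0 := by
    intro n c hc
    subst hc
    have h := REL n 1 2 (by norm_num)
    rw [h2] at h
    have h3 := Qn1 (n+1) 1 rfl
    omega
  have B : ∀ (u : ℕ) (n : ℕ) (c : ℤ), c = 2 + (u : ℤ) →
      Module.finrank k (LinearMap.range (D n c)) = 0 := by
    intro u
    induction u with
    | zero =>
      intro n c hc
      exact Qn2 n c (by push_cast at hc; omega)
    | succ v ih =>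
      intro n c hc
      have hAv : Module.finrank k (𝒜 (2 + (v : ℤ) + 1)) = 0 := by
        have h := RELa (2 + (v : ℤ)) (2 + (v : ℤ) + 1) (d + (2 + (v : ℤ) + 1))
          rfl (by ring)
        rw [hconc _ (by omega) (by omega), finrank_bot, Nat.zero_add,
          ih 0 (2 + (v : ℤ)) rfl] at h
        rcases Nat.mul_eq_zero.mp h with h' | h'
        · omega
        · exact h'
      have h := REL n (2 + (v : ℤ)) (2 + (v : ℤ) + 1) rfl
      rw [hAv, Nat.mul_zero, ih (n+1) (2 + (v : ℤ)) rfl] at h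
      have hc' : c = 2 + (v : ℤ) + 1 := by push_cast at hc; omega
      subst hc'
      omega
  have hbot : ∀ j : ℤ, 3 ≤ j → 𝒜 j = ⊥ := by
    intro j hj
    obtain ⟨u, hu⟩ : ∃ u : ℕ, j = 2 + (u : ℤ) + 1 := ⟨(j - 3).toNat, by omega⟩
    have hfa : Module.finrank k (𝒜 j) = 0 := by
      have h := RELa (2 + (u : ℤ)) j (d + j) hu (by omega)
      rw [hconc (d + j) (by omega) (by omega), finrank_bot, Nat.zero_add,
        B u 0 (2 + (u : ℤ)) rfl] at h
      rcases Nat.mul_eq_zero.mp h with h' | h'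
      · omega
      · exact h'
    haveI := hfdA j
    have hsub : Subsingleton ↥(𝒜 j) := Module.finrank_zero_iff.mp hfa
    rw [Submodule.eq_bot_iff]
    intro x hx
    have hxz : (⟨x, hx⟩ : ↥(𝒜 j)) = 0 := Subsingleton.elim _ _
    exact congrArg Subtype.val hxz
  exact ⟨h0, h2, hbot, md, md1⟩
end

section
/- Let R = Q/(g) where Q is a standard graded algebra and g ∈ Q_2 a non-zero-divisor, and suppose H_R(s) = (1+(e−1)s)(1+s) where e = dim_k R_1. If h ∈ Q_1 is a non-zero-divisor, then the module N = (Q/hQ)^p satisfies H_N(s) = p(1 + (e−1)s), and N admits a periodic-of-period-2 linear resolution over R; in particular the linear locus L_{p,(e−1)p}(R) is nonempty. -/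
open Module DirectSum

theorem Function.Exact.comp_left {M N P : Type*} [Zero P] {f : M → N} {g : N → P}
    (hfg : Function.Exact f g) (ι : Type*) :
    Function.Exact (f ∘ · : (ι → M) → ι → N) (g ∘ ·) := by
  intro y
  refine ⟨fun hy => ?_, ?_⟩
  · choose x hx using fun i => (hfg (y i)).mp (congrFun hy i)
    exact ⟨x, funext hx⟩
  · rintro ⟨x, rfl⟩
    funext i
    exact hfg.apply_apply_eq_zero (x i)

theorem apply_single_mem {ι M N F σ : Type*} [DecidableEq ι] [Zero M] [Zero N] [FunLike F M N]
    [ZeroHomClass F M N] [SetLike σ N] [ZeroMemClass σ N] (f : F) {S : σ} {x : M}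
    (hx : f x ∈ S) (i j : ι) : f ((Pi.single i x : ι → M) j) ∈ S := by
  rcases eq_or_ne j i with rfl | hji
  · rwa [Pi.single_eq_same]
  · rw [Pi.single_eq_of_ne hji, map_zero]
    exact zero_mem S

namespace Submodule

def piUnivEquiv {ι R : Type*} [Semiring R] {φ : ι → Type*} [∀ i, AddCommMonoid (φ i)]
    [∀ i, Module R (φ i)] (p : ∀ i, Submodule R (φ i)) : pi Set.univ p ≃ₗ[R] ∀ i, p i where
  toFun x i := ⟨x.1 i, x.2 i (Set.mem_univ i)⟩
  invFun x := ⟨fun i => x i, fun i _ => (x i).2⟩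
  map_add' _ _ := rfl
  map_smul' _ _ := rfl
  left_inv _ := rfl
  right_inv _ := rfl

theorem finrank_pi_univ_const {R M : Type*} [Ring R] [StrongRankCondition R] [AddCommGroup M]
    [Module R M] (n : ℕ) (W : Submodule R M) [Module.Free R W] [Module.Finite R W] :
    finrank R (pi Set.univ fun _ : Fin n => W) = n * finrank R W := by
  rw [(piUnivEquiv _).finrank_eq, finrank_pi_fintype, Finset.sum_const, Finset.card_univ,
    Fintype.card_fin, smul_eq_mul]

end Submodule

section PeriodicResolution

variable {A : Type*} [CommRing A] (a b : A)

def quotMulLeft : (A ⧸ Ideal.span {a}) →ₗ[A] A ⧸ Ideal.span {a * b} :=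
  Submodule.mapQ _ _ (LinearMap.mulLeft A b) fun x hx => by
    obtain ⟨c, rfl⟩ := Ideal.mem_span_singleton'.mp hx
    exact Ideal.mem_span_singleton'.mpr ⟨c, by simp only [LinearMap.mulLeft_apply]; ring⟩

@[simp]
theorem quotMulLeft_mk (x : A) :
    quotMulLeft a b (Submodule.Quotient.mk x) = Submodule.Quotient.mk (b * x) :=
  rfl

theorem span_singleton_mul_le : Ideal.span {a * b} ≤ Ideal.span {a} :=
  Ideal.span_singleton_le_span_singleton.mpr (dvd_mul_right a b)

variable {a b}

theorem quotMulLeft_injective (hb : IsLeftRegular b) : Function.Injective (quotMulLeft a b) := by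
  rw [injective_iff_map_eq_zero]
  intro z hz
  obtain ⟨x, rfl⟩ := Submodule.Quotient.mk_surjective _ z
  rw [quotMulLeft_mk, Submodule.Quotient.mk_eq_zero, Ideal.mem_span_singleton'] at hz
  obtain ⟨c, hc⟩ := hz
  rw [Submodule.Quotient.mk_eq_zero, Ideal.mem_span_singleton']
  exact ⟨c, hb (show b * (c * a) = b * x by rw [← hc]; ring)⟩

theorem exact_quotMulLeft_smul (ha : IsLeftRegular a) :
    Function.Exact (quotMulLeft a b) (a • LinearMap.id : (A ⧸ Ideal.span {a * b}) →ₗ[A] _) := by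
  refine fun z => ⟨fun hz => ?_, ?_⟩
  · obtain ⟨x, rfl⟩ := Submodule.Quotient.mk_surjective _ z
    rw [LinearMap.smul_apply, LinearMap.id_apply, ← Submodule.Quotient.mk_smul,
      Submodule.Quotient.mk_eq_zero, Ideal.mem_span_singleton', smul_eq_mul] at hz
    obtain ⟨c, hc⟩ := hz
    exact ⟨Submodule.Quotient.mk c,
      congrArg _ (ha (show a * (b * c) = a * x by rw [← hc]; ring))⟩
  · rintro ⟨y, rfl⟩
    obtain ⟨y, rfl⟩ := Submodule.Quotient.mk_surjective _ y
    rw [quotMulLeft_mk, LinearMap.smul_apply, LinearMap.id_apply, ← Submodule.Quotient.mk_smul,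
      Submodule.Quotient.mk_eq_zero, Ideal.mem_span_singleton']
    exact ⟨y, by rw [smul_eq_mul]; ring⟩

theorem exact_smul_factor :
    Function.Exact (a • LinearMap.id : (A ⧸ Ideal.span {a * b}) →ₗ[A] _)
      (Submodule.factor (span_singleton_mul_le a b)) := by
  intro z
  obtain ⟨x, rfl⟩ := Submodule.Quotient.mk_surjective _ z
  have hfactor : Submodule.factor (span_singleton_mul_le a b) (Submodule.Quotient.mk x) =
      Submodule.Quotient.mk x := Submodule.factor_mk _ x
  simp only [hfactor, LinearMap.smul_apply, LinearMap.id_apply, Set.mem_range,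
    Submodule.Quotient.mk_eq_zero, Ideal.mem_span_singleton']
  constructor
  · rintro ⟨c, rfl⟩
    exact ⟨Submodule.Quotient.mk c, by rw [← Submodule.Quotient.mk_smul, smul_eq_mul, mul_comm c a]⟩
  · rintro ⟨y, hy⟩
    obtain ⟨y, rfl⟩ := Submodule.Quotient.mk_surjective _ y
    rw [← Submodule.Quotient.mk_smul, Submodule.Quotient.eq, Ideal.mem_span_singleton'] at hy
    obtain ⟨c, hc⟩ := hy
    exact ⟨y - c * b, by rw [smul_eq_mul] at hc; linear_combination -hc⟩

end PeriodicResolution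

section GradedRing

variable {ι k A : Type*} [DecidableEq ι] [CommRing A]

theorem exists_mem_mul_eq_of_mem_span_singleton [AddLeftCancelMonoid ι] [CommSemiring k]
    [Algebra k A] (𝒜 : ι → Submodule k A) [GradedRing 𝒜] {i j : ι} {r x : A}
    (hr : r ∈ 𝒜 i) (hx : x ∈ 𝒜 (i + j)) (hxr : x ∈ Ideal.span {r}) :
    ∃ y ∈ 𝒜 j, r * y = x := by
  obtain ⟨a, rfl⟩ := Ideal.mem_span_singleton'.mp hxr
  refine ⟨decompose 𝒜 a j, (decompose 𝒜 a j).2, ?_⟩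
  rw [← coe_decompose_mul_add_of_left_mem 𝒜 hr, mul_comm, decompose_of_mem_same 𝒜 hx]

theorem finrank_map_mkQ_add_finrank [AddCommGroup ι] [Field k] [Algebra k A]
    (𝒜 : ι → Submodule k A) [GradedRing 𝒜] [∀ i, FiniteDimensional k (𝒜 i)]
    {d : ι} {r : A} (hr : r ∈ 𝒜 d) (hreg : IsLeftRegular r) (j : ι) :
    finrank k ((𝒜 j).map ((Ideal.span {r}).mkQ.restrictScalars k)) + finrank k (𝒜 (j - d))
      = finrank k (𝒜 j) := by
  set f := ((Ideal.span {r}).mkQ.restrictScalars k).domRestrict (𝒜 j)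
  have hmul : ∀ y ∈ 𝒜 (j - d), r * y ∈ 𝒜 j := fun y hy => by
    simpa using SetLike.GradedMul.mul_mem hr hy
  set μ : 𝒜 (j - d) →ₗ[k] 𝒜 j := (LinearMap.mulLeft k r).restrict hmul
  have hμ : Function.Injective μ := fun y z hyz => Subtype.ext (hreg (congrArg Subtype.val hyz))
  have hker : LinearMap.ker f = LinearMap.range μ := by
    ext ⟨x, hx⟩
    simp only [f, μ, LinearMap.mem_ker, LinearMap.domRestrict_apply, LinearMap.coe_restrictScalars,
      Submodule.mkQ_apply, Submodule.Quotient.mk_eq_zero, LinearMap.mem_range, Subtype.ext_iff,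
      Subtype.exists]
    constructor
    · intro hxr
      obtain ⟨y, hy, rfl⟩ := exists_mem_mul_eq_of_mem_span_singleton 𝒜 hr
        (by rwa [add_sub_cancel]) hxr
      exact ⟨y, hy, rfl⟩
    · rintro ⟨y, -, rfl⟩
      exact Ideal.mul_mem_right y _ (Ideal.mem_span_singleton_self r)
  have := LinearMap.finrank_range_add_finrank_ker f
  rwa [LinearMap.range_domRestrict, hker, LinearMap.finrank_range_of_inj hμ] at this

end GradedRing

namespace IsStandardGraded

variable {k Q : Type*} [Field k] [CommRing Q] [Algebra k Q] {𝒜 : ℤ → Submodule k Q}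

noncomputable abbrev gradedRing (hQ : IsStandardGraded k Q 𝒜) : GradedRing 𝒜 :=
  { hQ.internal.chooseDecomposition with one_mem := hQ.one_mem, mul_mem := hQ.mul_mem }

theorem exists_mem_mul_eq_of_mem_span_singleton (hQ : IsStandardGraded k Q 𝒜) {i j : ℤ}
    {r x : Q} (hr : r ∈ 𝒜 i) (hx : x ∈ 𝒜 (i + j)) (hxr : x ∈ Ideal.span {r}) :
    ∃ y ∈ 𝒜 j, r * y = x :=
  letI := hQ.gradedRing
  _root_.exists_mem_mul_eq_of_mem_span_singleton 𝒜 hr hx hxr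

theorem finrank_map_mkQ_add_finrank (hQ : IsStandardGraded k Q 𝒜) {d : ℤ} {r : Q}
    (hr : r ∈ 𝒜 d) (hreg : IsLeftRegular r) (j : ℤ) :
    finrank k ((𝒜 j).map ((Ideal.span {r}).mkQ.restrictScalars k)) + finrank k (𝒜 (j - d))
      = finrank k (𝒜 j) :=
  letI := hQ.gradedRing
  haveI := hQ.finite_dim
  _root_.finrank_map_mkQ_add_finrank 𝒜 hr hreg j

theorem finrank_eq_zero_of_neg (hQ : IsStandardGraded k Q 𝒜) {j : ℤ} (hj : j < 0) :
    finrank k (𝒜 j) = 0 := by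
  rw [hQ.bot_of_neg j hj, finrank_bot]

theorem finrank_zero_of_quotient (hQ : IsStandardGraded k Q 𝒜) {g : Q} (hg : g ∈ 𝒜 2)
    (hgreg : IsLeftRegular g)
    (hR0 : finrank k ((𝒜 0).map ((Ideal.span {g}).mkQ.restrictScalars k)) = 1) :
    finrank k (𝒜 0) = 1 := by
  have := hQ.finrank_map_mkQ_add_finrank hg hgreg 0
  rwa [hR0, hQ.finrank_eq_zero_of_neg (by norm_num), add_zero, eq_comm] at this

theorem finrank_succ_of_quotient (hQ : IsStandardGraded k Q 𝒜) {g : Q} (hg : g ∈ 𝒜 2)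
    (hgreg : IsLeftRegular g) {e : ℕ} (he : 1 ≤ e) (h0 : finrank k (𝒜 0) = 1)
    (hR1 : finrank k ((𝒜 1).map ((Ideal.span {g}).mkQ.restrictScalars k)) = e)
    (hR2 : finrank k ((𝒜 2).map ((Ideal.span {g}).mkQ.restrictScalars k)) = e - 1)
    (hR3 : ∀ j : ℤ, 3 ≤ j → (𝒜 j).map ((Ideal.span {g}).mkQ.restrictScalars k) = ⊥)
    (n : ℕ) : finrank k (𝒜 (n + 1)) = e := by
  induction n using Nat.twoStepInduction with
  | zero =>
    have := hQ.finrank_map_mkQ_add_finrank hg hgreg 1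
    rw [hR1, hQ.finrank_eq_zero_of_neg (by norm_num)] at this
    simpa using this.symm
  | one =>
    show finrank k (𝒜 2) = e
    have := hQ.finrank_map_mkQ_add_finrank hg hgreg 2
    rw [hR2, show (2 : ℤ) - 2 = 0 by norm_num, h0] at this
    omega
  | more n ih _ =>
    have := hQ.finrank_map_mkQ_add_finrank hg hgreg (n + 2 + 1)
    rw [hR3 _ (by omega), finrank_bot, zero_add, show (n : ℤ) + 2 + 1 - 2 = n + 1 by ring,
      ih] at this
    push_cast
    exact this.symm

theorem finrank_map_mkQ_zero (hQ : IsStandardGraded k Q 𝒜) (h0 : finrank k (𝒜 0) = 1) {h : Q}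
    (hh : h ∈ 𝒜 1) (hhreg : IsLeftRegular h) :
    finrank k ((𝒜 0).map ((Ideal.span {h}).mkQ.restrictScalars k)) = 1 := by
  have := hQ.finrank_map_mkQ_add_finrank hh hhreg 0
  rwa [hQ.finrank_eq_zero_of_neg (by norm_num), add_zero, h0] at this

theorem finrank_map_mkQ_one (hQ : IsStandardGraded k Q 𝒜) {e : ℕ} (h0 : finrank k (𝒜 0) = 1)
    (hpos : ∀ n : ℕ, finrank k (𝒜 (n + 1)) = e) {h : Q} (hh : h ∈ 𝒜 1)
    (hhreg : IsLeftRegular h) :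
    finrank k ((𝒜 1).map ((Ideal.span {h}).mkQ.restrictScalars k)) = e - 1 := by
  have := hQ.finrank_map_mkQ_add_finrank hh hhreg 1
  have h1 : finrank k (𝒜 1) = e := by simpa using hpos 0
  rw [sub_self, h0, h1] at this
  omega

theorem map_mkQ_eq_bot (hQ : IsStandardGraded k Q 𝒜) {e : ℕ}
    (hpos : ∀ n : ℕ, finrank k (𝒜 (n + 1)) = e) {h : Q} (hh : h ∈ 𝒜 1) (hhreg : IsLeftRegular h)
    {j : ℤ} (hj0 : j ≠ 0) (hj1 : j ≠ 1) :
    (𝒜 j).map ((Ideal.span {h}).mkQ.restrictScalars k) = ⊥ := by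
  rcases lt_or_gt_of_ne hj0 with hneg | hpos'
  · rw [hQ.bot_of_neg j hneg, Submodule.map_bot]
  obtain ⟨n, rfl⟩ : ∃ n : ℕ, j = n + 1 + 1 := ⟨(j - 2).toNat, by omega⟩
  have hrank := hQ.finrank_map_mkQ_add_finrank hh hhreg (n + 1 + 1)
  rw [add_sub_cancel_right, hpos, ← Nat.cast_succ, hpos, add_eq_right] at hrank
  have := hQ.finite_dim (n + 1 + 1)
  exact Submodule.finrank_eq_zero.mp hrank

theorem quotMulLeft_mem_map (hQ : IsStandardGraded k Q 𝒜) {a b : Q} {d j : ℤ} (hb : b ∈ 𝒜 d)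
    {z : Q ⧸ Ideal.span {a}} (hz : z ∈ (𝒜 j).map ((Ideal.span {a}).mkQ.restrictScalars k)) :
    quotMulLeft a b z ∈ (𝒜 (j + d)).map ((Ideal.span {a * b}).mkQ.restrictScalars k) := by
  obtain ⟨x, hx, rfl⟩ := Submodule.mem_map.mp hz
  exact ⟨b * x, add_comm d j ▸ hQ.mul_mem hb hx, rfl⟩

end IsStandardGraded

theorem stmt8_general {k Q : Type*} [Field k] [CommRing Q] [Algebra k Q]
    (𝒜 : ℤ → Submodule k Q) (hQ : IsStandardGraded k Q 𝒜)
    (g : Q) (hg2 : g ∈ 𝒜 2) (hgreg : ∀ x : Q, g * x = 0 → x = 0)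
    (e : ℕ) (he2 : 2 ≤ e)
    (hR0 : Module.finrank k ((𝒜 0).map
      (((Ideal.span {g} : Ideal Q).mkQ).restrictScalars k)) = 1)
    (hR1 : Module.finrank k ((𝒜 1).map
      (((Ideal.span {g} : Ideal Q).mkQ).restrictScalars k)) = e)
    (hR2 : Module.finrank k ((𝒜 2).map
      (((Ideal.span {g} : Ideal Q).mkQ).restrictScalars k)) = e - 1)
    (hR3 : ∀ j : ℤ, 3 ≤ j → (𝒜 j).map
      (((Ideal.span {g} : Ideal Q).mkQ).restrictScalars k) = ⊥)
    (h : Q) (hh1 : h ∈ 𝒜 1) (hhreg : ∀ x : Q, h * x = 0 → x = 0)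
    (p : ℕ) :
    -- Hilbert series of N = (Q/hQ)^p : H_N(s) = p + (e−1)p s
    (Module.finrank k (Submodule.pi Set.univ (fun _ : Fin p =>
        (𝒜 0).map (((Ideal.span {h} : Ideal Q).mkQ).restrictScalars k))) = p) ∧
    (Module.finrank k (Submodule.pi Set.univ (fun _ : Fin p =>
        (𝒜 1).map (((Ideal.span {h} : Ideal Q).mkQ).restrictScalars k))) = (e - 1) * p) ∧
    (∀ j : ℤ, j ≠ 0 → j ≠ 1 →
      Submodule.pi Set.univ (fun _ : Fin p =>
        (𝒜 j).map (((Ideal.span {h} : Ideal Q).mkQ).restrictScalars k)) = ⊥) ∧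
    -- N is linear of period 2 over R = Q/(g):
    -- an exact sequence 0 → N(−2) → R^p(−1) → R^p → N → 0 of (Q-linear maps of)
    -- R-modules, with the middle map given by a matrix of linear forms.
    ∃ (ι : (Fin p → Q ⧸ Ideal.span {h}) →ₗ[Q] (Fin p → Q ⧸ Ideal.span {g}))
      (ψ : (Fin p → Q ⧸ Ideal.span {g}) →ₗ[Q] (Fin p → Q ⧸ Ideal.span {g}))
      (π : (Fin p → Q ⧸ Ideal.span {g}) →ₗ[Q] (Fin p → Q ⧸ Ideal.span {h})),
      Function.Injective ι ∧ Function.Surjective π ∧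
      Function.Exact ι ψ ∧ Function.Exact ψ π ∧
      (∀ (j : ℤ),
        ∀ n ∈ Submodule.pi Set.univ (fun _ : Fin p =>
          (𝒜 j).map (((Ideal.span {h} : Ideal Q).mkQ).restrictScalars k)),
        ∀ i : Fin p, ι n i ∈ (𝒜 (j + 1)).map
          (((Ideal.span {g} : Ideal Q).mkQ).restrictScalars k)) ∧
      (∀ (i j : Fin p), ψ (Pi.single i 1) j ∈ (𝒜 1).map
          (((Ideal.span {g} : Ideal Q).mkQ).restrictScalars k)) ∧
      (∀ i : Fin p, π (Pi.single i 1) ∈ Submodule.pi Set.univ (fun _ : Fin p =>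
          (𝒜 0).map (((Ideal.span {h} : Ideal Q).mkQ).restrictScalars k))) := by
  have hgreg' : IsLeftRegular g := isLeftRegular_iff_right_eq_zero_of_mul.mpr hgreg
  have hhreg' : IsLeftRegular h := isLeftRegular_iff_right_eq_zero_of_mul.mpr hhreg
  have h0 := hQ.finrank_zero_of_quotient hg2 hgreg' hR0
  have hpos := hQ.finrank_succ_of_quotient hg2 hgreg' (by omega) h0 hR1 hR2 hR3
  have hbot {j : ℤ} (hj0 : j ≠ 0) (hj1 : j ≠ 1) := hQ.map_mkQ_eq_bot hpos hh1 hhreg' hj0 hj1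
  obtain ⟨h', hh', rfl⟩ : ∃ h' ∈ 𝒜 1, h * h' = g := by
    refine hQ.exists_mem_mul_eq_of_mem_span_singleton hh1 hg2 ?_
    simpa using LinearMap.le_ker_iff_map.mpr (hbot (j := 2) (by norm_num) (by norm_num)) hg2
  have := hQ.finite_dim
  refine ⟨?_, ?_, fun j hj0 hj1 => ?_, (quotMulLeft h h').compLeft (Fin p),
    (h • LinearMap.id).compLeft (Fin p),
    (Submodule.factor (span_singleton_mul_le h h')).compLeft (Fin p),
    (quotMulLeft_injective hgreg'.of_mul).comp_left,
    (Submodule.factor_surjective (span_singleton_mul_le h h')).comp_left,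
    (exact_quotMulLeft_smul hhreg').comp_left _, exact_smul_factor.comp_left _,
    fun j n hn i => hQ.quotMulLeft_mem_map hh' (hn i trivial),
    fun i j => ?_, fun i => Submodule.mem_pi.mpr fun j _ => ?_⟩
  · rw [Submodule.finrank_pi_univ_const, hQ.finrank_map_mkQ_zero h0 hh1 hhreg', mul_one]
  · rw [Submodule.finrank_pi_univ_const, hQ.finrank_map_mkQ_one h0 hpos hh1 hhreg', mul_comm]
  · rw [hbot hj0 hj1, Submodule.pi_univ_bot]
  · rw [LinearMap.compLeft_apply, Function.comp_apply]
    refine apply_single_mem _ ?_ i j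
    rw [LinearMap.smul_apply, LinearMap.id_apply, Algebra.smul_def, mul_one]
    exact Submodule.mem_map_of_mem hh1
  · rw [LinearMap.compLeft_apply, Function.comp_apply]
    refine apply_single_mem _ ?_ i j
    exact ⟨1, hQ.one_mem, rfl⟩

/-- last part of Corollary 3.3: let `R = Q/(g)` with `g ∈ Q₂` a
non-zero-divisor and `H_R(s) = (1+(e−1)s)(1+s)` (stated coefficientwise for the
induced grading on `Q/(g)`). If `h ∈ Q₁` is a non-zero-divisor, then
`N = (Q/hQ)^p` satisfies `H_N(s) = p(1+(e−1)s)`, and `N` admits a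
periodic-of-period-2 linear resolution over `R`:
`0 → N(−2) → R^p(−1) → R^p → N → 0`; in particular the linear locus
`L_{p,(e−1)p}(R)` is nonempty. -/
theorem stmt8 {k Q : Type*} [Field k] [CommRing Q] [Algebra k Q]
    (𝒜 : ℤ → Submodule k Q) (hQ : IsStandardGraded k Q 𝒜)
    (g : Q) (hg2 : g ∈ 𝒜 2) (hgreg : ∀ x : Q, g * x = 0 → x = 0)
    (e : ℕ) (he2 : 2 ≤ e)
    (hR0 : Module.finrank k ((𝒜 0).map
      (((Ideal.span {g} : Ideal Q).mkQ).restrictScalars k)) = 1)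
    (hR1 : Module.finrank k ((𝒜 1).map
      (((Ideal.span {g} : Ideal Q).mkQ).restrictScalars k)) = e)
    (hR2 : Module.finrank k ((𝒜 2).map
      (((Ideal.span {g} : Ideal Q).mkQ).restrictScalars k)) = e - 1)
    (hR3 : ∀ j : ℤ, 3 ≤ j → (𝒜 j).map
      (((Ideal.span {g} : Ideal Q).mkQ).restrictScalars k) = ⊥)
    (h : Q) (hh1 : h ∈ 𝒜 1) (hhreg : ∀ x : Q, h * x = 0 → x = 0)
    (p : ℕ) (hp : 1 ≤ p) :
    -- Hilbert series of N = (Q/hQ)^p : H_N(s) = p + (e−1)p s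
    (Module.finrank k (Submodule.pi Set.univ (fun _ : Fin p =>
        (𝒜 0).map (((Ideal.span {h} : Ideal Q).mkQ).restrictScalars k))) = p) ∧
    (Module.finrank k (Submodule.pi Set.univ (fun _ : Fin p =>
        (𝒜 1).map (((Ideal.span {h} : Ideal Q).mkQ).restrictScalars k))) = (e - 1) * p) ∧
    (∀ j : ℤ, j ≠ 0 → j ≠ 1 →
      Submodule.pi Set.univ (fun _ : Fin p =>
        (𝒜 j).map (((Ideal.span {h} : Ideal Q).mkQ).restrictScalars k)) = ⊥) ∧
    -- N is linear of period 2 over R = Q/(g):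
    -- an exact sequence 0 → N(−2) → R^p(−1) → R^p → N → 0 of (Q-linear maps of)
    -- R-modules, with the middle map given by a matrix of linear forms.
    ∃ (ι : (Fin p → Q ⧸ Ideal.span {h}) →ₗ[Q] (Fin p → Q ⧸ Ideal.span {g}))
      (ψ : (Fin p → Q ⧸ Ideal.span {g}) →ₗ[Q] (Fin p → Q ⧸ Ideal.span {g}))
      (π : (Fin p → Q ⧸ Ideal.span {g}) →ₗ[Q] (Fin p → Q ⧸ Ideal.span {h})),
      Function.Injective ι ∧ Function.Surjective π ∧
      Function.Exact ι ψ ∧ Function.Exact ψ π ∧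
      (∀ (j : ℤ),
        ∀ n ∈ Submodule.pi Set.univ (fun _ : Fin p =>
          (𝒜 j).map (((Ideal.span {h} : Ideal Q).mkQ).restrictScalars k)),
        ∀ i : Fin p, ι n i ∈ (𝒜 (j + 1)).map
          (((Ideal.span {g} : Ideal Q).mkQ).restrictScalars k)) ∧
      (∀ (i j : Fin p), ψ (Pi.single i 1) j ∈ (𝒜 1).map
          (((Ideal.span {g} : Ideal Q).mkQ).restrictScalars k)) ∧
      (∀ i : Fin p, π (Pi.single i 1) ∈ Submodule.pi Set.univ (fun _ : Fin p =>
          (𝒜 0).map (((Ideal.span {h} : Ideal Q).mkQ).restrictScalars k))) :=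
  stmt8_general 𝒜 hQ g hg2 hgreg e he2 hR0 hR1 hR2 hR3 h hh1 hhreg p
end

section
/- Let R be a standard graded k-algebra which is short (R_3 = 0), Artinian Gorenstein with socle in degree 2, and e = dim_k R_1 ≥ 2. Let M be a cyclic graded R-module with H_M(s) = 1 + (e−1)s whose minimal free resolution begins R(−2) →^b R(−1) →^a R → M → 0 with a, b ∈ R_1 and exactness at R(−1) and R. Then bR = (0 : a), (0 : b) = aR, and there is an exact sequence 0 → M(−2) → R(−1) →^a R → M → 0, so M is linear of period 2. -/
/-- Proposition 4.3 / proof of Prop. 2.4: let `R` be a short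
(`R_j = 0` for `j ≥ 3`) Artinian Gorenstein standard graded algebra with socle in
degree 2 (`dim_k R_2 = 1` and every nonzero element killed by `R_1` lies in `R_2`),
`e = dim_k R_1 ≥ 2`.  Let `a, b ∈ R_1` give the start of a minimal free resolution
`R(−2) →ᵇ R(−1) →ᵃ R → M → 0` of `M = R/aR` with `H_M(s) = 1 + (e−1)s`, exact at
`R(−1)` and `R` (so `bR = (0:a)`).  Then `bR = (0:a)`, `(0:b) = aR`, and there is
an exact sequence `0 → M(−2) → R(−1) →ᵃ R → M → 0`: `M` is linear of period 2. -/
theorem stmt9 {k R : Type*} [Field k] [CommRing R] [Algebra k R]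
    (𝒜 : ℤ → Submodule k R) (hR : IsStandardGraded k R 𝒜)
    (hshort : ∀ j : ℤ, 3 ≤ j → 𝒜 j = ⊥)
    (hsoc2 : Module.finrank k (𝒜 2) = 1)
    (hGor : ∀ x : R, x ≠ 0 → (∀ y ∈ 𝒜 1, x * y = 0) → x ∈ 𝒜 2)
    (e : ℕ) (he : Module.finrank k (𝒜 1) = e) (he2 : 2 ≤ e)
    (a b : R) (ha : a ∈ 𝒜 1) (hb : b ∈ 𝒜 1)
    (hexact : ∀ x : R, a * x = 0 ↔ ∃ y : R, x = b * y)
    (hM0 : Module.finrank k ((𝒜 0).map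
      (((Ideal.span {a} : Ideal R).mkQ).restrictScalars k)) = 1)
    (hM1 : Module.finrank k ((𝒜 1).map
      (((Ideal.span {a} : Ideal R).mkQ).restrictScalars k)) = e - 1)
    (hM2 : (𝒜 2).map (((Ideal.span {a} : Ideal R).mkQ).restrictScalars k) = ⊥) :
    (∀ x : R, a * x = 0 ↔ ∃ y : R, x = b * y) ∧
    (∀ x : R, b * x = 0 ↔ ∃ y : R, x = a * y) ∧
    ∃ ι : (R ⧸ Ideal.span {a}) →ₗ[R] R,
      (∀ x : R, ι (Submodule.Quotient.mk x) = b * x) ∧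
      Function.Injective ι ∧
      Function.Exact ι (LinearMap.mul R R a) ∧
      Function.Exact (LinearMap.mul R R a) (Ideal.span {a} : Ideal R).mkQ := by

  classical
  -- `a * b = 0`
  have hab : a * b = 0 := (hexact b).mpr ⟨1, by ring⟩
  -- R is finite dimensional over k
  have hfin : FiniteDimensional k R := by
    have htop : (⊤ : Submodule k R) = 𝒜 0 ⊔ 𝒜 1 ⊔ 𝒜 2 := by
      have h1 : (⨆ i, 𝒜 i) = ⊤ := hR.internal.submodule_iSup_eq_top
      refine le_antisymm ?_ le_top
      rw [← h1]
      refine iSup_le fun i => ?_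
      rcases lt_or_ge i 0 with h | h
      · rw [hR.bot_of_neg i h]; exact bot_le
      rcases le_or_gt 3 i with h3 | h3
      · rw [hshort i h3]; exact bot_le
      · interval_cases i
        · exact le_sup_of_le_left le_sup_left
        · exact le_sup_of_le_left le_sup_right
        · exact le_sup_right
    have := hR.finite_dim 0
    have := hR.finite_dim 1
    have := hR.finite_dim 2
    have : FiniteDimensional k ((𝒜 0 ⊔ 𝒜 1 ⊔ 𝒜 2 : Submodule k R) : Type _) :=
      Submodule.finiteDimensional_sup _ _
    rw [← htop] at this
    exact Submodule.topEquiv.finiteDimensional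
  -- the k-linear multiplication maps
  set fa : R →ₗ[k] R := (LinearMap.mul R R a).restrictScalars k with hfa
  set fb : R →ₗ[k] R := (LinearMap.mul R R b).restrictScalars k with hfb
  have hfa_apply : ∀ x, fa x = a * x := fun x => rfl
  have hfb_apply : ∀ x, fb x = b * x := fun x => rfl
  -- ker fa = range fb
  have hker : LinearMap.ker fa = LinearMap.range fb := by
    ext x
    simp only [LinearMap.mem_ker, LinearMap.mem_range, hfa_apply, hfb_apply]
    rw [hexact x]
    constructor
    · rintro ⟨y, hy⟩; exact ⟨y, hy.symm⟩
    · rintro ⟨y, hy⟩; exact ⟨y, hy.symm⟩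
  -- range fa ≤ ker fb
  have hle : LinearMap.range fa ≤ LinearMap.ker fb := by
    rintro x ⟨y, rfl⟩
    simp only [LinearMap.mem_ker, hfa_apply, hfb_apply]
    calc b * (a * y) = (a * b) * y := by ring
    _ = 0 := by rw [hab, zero_mul]
  -- dimension count
  have hdima : Module.finrank k (LinearMap.range fa) + Module.finrank k (LinearMap.ker fa)
      = Module.finrank k R := LinearMap.finrank_range_add_finrank_ker fa
  have hdimb : Module.finrank k (LinearMap.range fb) + Module.finrank k (LinearMap.ker fb)
      = Module.finrank k R := LinearMap.finrank_range_add_finrank_ker fb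
  rw [hker] at hdima
  have hdim : Module.finrank k (LinearMap.ker fb) = Module.finrank k (LinearMap.range fa) := by
    omega
  have heq : LinearMap.range fa = LinearMap.ker fb :=
    Submodule.eq_of_le_of_finrank_le hle (le_of_eq hdim)
  -- the key annihilator statement
  have hbex : ∀ x : R, b * x = 0 ↔ ∃ y : R, x = a * y := by
    intro x
    constructor
    · intro hx
      have : x ∈ LinearMap.ker fb := by simpa [hfb_apply] using hx
      rw [← heq] at this
      obtain ⟨y, hy⟩ := this
      exact ⟨y, hy.symm⟩
    · rintro ⟨y, rfl⟩
      calc b * (a * y) = (a * b) * y := by ring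
      _ = 0 := by rw [hab, zero_mul]
  refine ⟨hexact, hbex, ?_⟩
  -- the map ι : R/aR → R, mk x ↦ b * x
  have hsub : Ideal.span {a} ≤ LinearMap.ker (LinearMap.mul R R b) := by
    intro x hx
    rw [Ideal.mem_span_singleton] at hx
    obtain ⟨c, rfl⟩ := hx
    simp only [LinearMap.mem_ker, LinearMap.mul_apply']
    calc b * (a * c) = (a * b) * c := by ring
    _ = 0 := by rw [hab, zero_mul]
  refine ⟨Submodule.liftQ _ (LinearMap.mul R R b) hsub, fun x => ?_, ?_, ?_, ?_⟩
  · rfl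
  · -- injectivity
    rw [← LinearMap.ker_eq_bot]
    rw [Submodule.ker_liftQ]
    rw [Submodule.eq_bot_iff]
    intro q hq
    obtain ⟨x, hx, rfl⟩ := Submodule.mem_map.mp hq
    rw [LinearMap.mem_ker, LinearMap.mul_apply'] at hx
    obtain ⟨y, rfl⟩ := (hbex x).mp hx
    rw [Submodule.mkQ_apply, Submodule.Quotient.mk_eq_zero]
    exact Ideal.mem_span_singleton.mpr ⟨y, rfl⟩
  · -- exact ι (mul a)
    intro x
    simp only [LinearMap.mul_apply']
    rw [hexact x]
    constructor
    · rintro ⟨y, rfl⟩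
      exact ⟨Submodule.Quotient.mk y, rfl⟩
    · rintro ⟨q, hq⟩
      obtain ⟨y, rfl⟩ := Submodule.Quotient.mk_surjective _ q
      exact ⟨y, hq.symm⟩
  · -- exact (mul a) mkQ
    intro x
    rw [Submodule.mkQ_apply, Submodule.Quotient.mk_eq_zero]
    rw [Ideal.mem_span_singleton]
    constructor
    · rintro ⟨c, rfl⟩; exact ⟨c, rfl⟩
    · rintro ⟨c, hc⟩; exact ⟨c, hc.symm⟩
end

section
/- Let R be a Koszul standard graded k-algebra, M a graded R-module with indeg M = 0, and suppose there is an exact sequence of graded R-modules 0 → L → R(−m)^{b_m} → ⋯ → R(−1)^{b_1} → R^{b_0} → M → 0 with L_j = 0 for j ≤ m. Then H_M(s) = Σ_{i=0}^m (−1)^i b_i s^i H_R(s) + (−1)^{m+1} H_L(s), and consequently P^R_M(s,t) ≡ H_M(−st)·H_R(−st)^{−1} (mod t^{m+1}). -/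
/-!
In each degree `j` the resolution restricts to an exact sequence of finite-dimensional
`k`-spaces `0 → L_j → (R_{j-m})^{b_m} → ⋯ → (R_j)^{b_0} → M_j → 0`: all maps preserve degrees,
so they commute with the projections onto homogeneous components, and exactness descends to
each degree. Rank–nullity along this sequence gives the alternating-sum formula for `dim M_j`.
When `L_j = 0` for `j ≤ m` (and `R_i = 0` for `i < 0`), multiplying it by `(-1)^j` gives the
coefficients of `(Σ b_i t^i) · H_R(-t)` and `H_M(-t)` in degrees at most `m`.
-/

open DirectSum Module

/-- Degreewise exactness: `p` stands for the projection onto the homogeneous component `Q`. -/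
theorem Submodule.map_eq_inf_range_of_proj {R U V : Type*} [Semiring R] [AddCommMonoid U]
    [Module R U] [AddCommMonoid V] [Module R V] {f : U →ₗ[R] V} {P : Submodule R U}
    {Q : Submodule R V} (p : V → V) (hp : ∀ v ∈ Q, p v = v) (hPQ : P.map f ≤ Q)
    (hfp : ∀ u, p (f u) ∈ P.map f) :
    P.map f = Q ⊓ LinearMap.range f := by
  refine le_antisymm (le_inf hPQ LinearMap.map_le_range) ?_
  rintro _ ⟨hv, u, rfl⟩
  exact hp _ hv ▸ hfp u

theorem Submodule.finrank_eq_finrank_map_add_finrank_map_of_exact {k U V W : Type*}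
    [DivisionRing k] [AddCommGroup U] [Module k U] [AddCommGroup V] [Module k V]
    [AddCommGroup W] [Module k W] {f : U →ₗ[k] V} {g : V →ₗ[k] W} (hfg : Function.Exact f g)
    {P : Submodule k U} {Q : Submodule k V} [FiniteDimensional k Q]
    (hP : P.map f = Q ⊓ LinearMap.range f) :
    finrank k Q = finrank k (P.map f) + finrank k (Q.map g) := by
  have h := (g.domRestrict Q).finrank_range_add_finrank_ker
  rw [LinearMap.range_domRestrict, LinearMap.ker_domRestrict, ← Submodule.finrank_map_subtype_eq,
    Submodule.map_comap_subtype, hfg.linearMap_ker_eq, ← hP] at h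
  omega

theorem eq_alternating_sum_of_telescoping {c I : ℕ → ℤ} {x : ℤ} {N : ℕ} (h0 : c 0 = I 0 + x)
    (hsucc : ∀ n, n + 1 ≤ N → c (n + 1) = I (n + 1) + I n) :
    ∀ n ≤ N, x = ∑ i ∈ Finset.range (n + 1), (-1) ^ i * c i + (-1) ^ (n + 1) * I n := by
  intro n hn
  induction n with
  | zero => rw [Finset.sum_range_one, h0]; ring
  | succ n ih =>
    rw [Finset.sum_range_succ, ih (Nat.le_of_succ_le hn), hsucc n hn]
    ring

theorem DirectSum.decompose_map_of_mapsTo {ι ι' σ τ V W : Type*} [DecidableEq ι] [DecidableEq ι']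
    [AddCommMonoid V] [AddCommMonoid W] [SetLike σ V] [AddSubmonoidClass σ V]
    [SetLike τ W] [AddSubmonoidClass τ W] (𝒱 : ι → σ) (𝒲 : ι' → τ)
    [Decomposition 𝒱] [Decomposition 𝒲] {e : ι → ι'} (he : Function.Injective e)
    (f : V →+ W) (hf : ∀ i, ∀ v ∈ 𝒱 i, f v ∈ 𝒲 (e i)) (v : V) (j : ι) :
    (decompose 𝒲 (f v) (e j) : W) = f (decompose 𝒱 v j) := by
  induction v using DirectSum.Decomposition.inductionOn 𝒱 with
  | zero => simp
  | @homogeneous i v =>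
    by_cases h : i = j
    · subst h
      rw [decompose_of_mem_same _ v.2, decompose_of_mem_same _ (hf _ _ v.2)]
    · rw [decompose_of_mem_ne _ v.2 h, decompose_of_mem_ne _ (hf _ _ v.2) (he.ne h), map_zero]
  | add v v' hv hv' => simp [decompose_add, hv, hv']

def Submodule.piUnivEquiv_s16 {R ι : Type*} [Semiring R] {V : ι → Type*}
    [∀ i, AddCommMonoid (V i)] [∀ i, Module R (V i)] (p : ∀ i, Submodule R (V i)) :
    Submodule.pi Set.univ p ≃ₗ[R] ∀ i, p i where
  toFun x i := ⟨x.1 i, x.2 i trivial⟩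
  invFun y := ⟨fun i => y i, fun i _ => (y i).2⟩
  map_add' _ _ := rfl
  map_smul' _ _ := rfl

section FreeModule

variable {k R : Type*} [Field k] [CommRing R] [Algebra k R] (𝒜 : ℤ → Submodule k R)

/-- The degree-`j` component `R(-n)^ι_j = (R_{j-n})^ι` of a shifted free module. -/
def freeComponent (ι : Type*) (n j : ℤ) : Submodule k (ι → R) :=
  Submodule.pi Set.univ fun _ => 𝒜 (j - n)

variable {𝒜}

theorem mem_freeComponent {ι : Type*} {n j : ℤ} {x : ι → R} :
    x ∈ freeComponent 𝒜 ι n j ↔ ∀ a, x a ∈ 𝒜 (j - n) := by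
  simp [freeComponent]

instance {ι : Type*} [Finite ι] {n j : ℤ} [FiniteDimensional k (𝒜 (j - n))] :
    FiniteDimensional k (freeComponent 𝒜 ι n j) :=
  (Submodule.piUnivEquiv_s16 _).symm.finiteDimensional

theorem finrank_freeComponent {ι : Type*} [Fintype ι] {n j : ℤ}
    [FiniteDimensional k (𝒜 (j - n))] :
    finrank k (freeComponent 𝒜 ι n j) = Fintype.card ι * finrank k (𝒜 (j - n)) := by
  rw [freeComponent, (Submodule.piUnivEquiv_s16 _).finrank_eq, Module.finrank_pi_fintype,
    Finset.sum_const, Finset.card_univ, smul_eq_mul]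

variable [Decomposition 𝒜]

variable (𝒜) in
def freeProj (ι : Type*) (n j : ℤ) (y : ι → R) : ι → R :=
  fun a => decompose 𝒜 (y a) (j - n)

theorem freeProj_of_mem {ι : Type*} {n j : ℤ} {y : ι → R} (hy : y ∈ freeComponent 𝒜 ι n j) :
    freeProj 𝒜 ι n j y = y :=
  funext fun a => decompose_of_mem_same 𝒜 (mem_freeComponent.mp hy a)

theorem freeProj_mem {ι : Type*} (n j : ℤ) (y : ι → R) :
    freeProj 𝒜 ι n j y ∈ freeComponent 𝒜 ι n j :=
  mem_freeComponent.mpr fun a => (decompose 𝒜 (y a) _).2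

theorem map_freeComponent_eq_inf_range_of_mem [SetLike.GradedMul 𝒜] {ι ι' : Type*}
    [Fintype ι'] [DecidableEq ι'] (F : (ι' → R) →ₗ[R] ι → R) {d : ℤ}
    (hF : ∀ l a, F (Pi.single l 1) a ∈ 𝒜 d) (n j : ℤ) :
    (freeComponent 𝒜 ι' (n + d) j).map (F.restrictScalars k) =
      freeComponent 𝒜 ι n j ⊓ LinearMap.range (F.restrictScalars k) := by
  have hdeg : j - n = d + (j - (n + d)) := by ring
  have hF_apply : ∀ x a, F x a = ∑ l, F (Pi.single l 1) a * x l := fun x a => by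
    rw [← LinearMap.toMatrix'_mulVec F x]
    rfl
  have hmul : ∀ l a (r : R) i, (decompose 𝒜 (F (Pi.single l 1) a * r) (d + i) : R) =
      F (Pi.single l 1) a * decompose 𝒜 r i :=
    fun l a => decompose_map_of_mapsTo 𝒜 𝒜 (add_right_injective d) (AddMonoidHom.mulLeft _)
      fun _ _ hr => SetLike.GradedMul.mul_mem (hF l a) hr
  refine Submodule.map_eq_inf_range_of_proj (freeProj 𝒜 ι n j) (fun _ => freeProj_of_mem)
    ?_ fun x => ⟨freeProj 𝒜 ι' (n + d) j x, freeProj_mem _ _ x, funext fun a => ?_⟩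
  · rintro _ ⟨x, hx, rfl⟩
    refine mem_freeComponent.mpr fun a => hF_apply x a ▸ Submodule.sum_mem _ fun l _ => ?_
    exact hdeg ▸ SetLike.GradedMul.mul_mem (hF l a) (mem_freeComponent.mp hx l)
  · change F (freeProj 𝒜 ι' (n + d) j x) a = (decompose 𝒜 (F x a) (j - n) : R)
    rw [hF_apply, hF_apply, hdeg, decompose_sum, DFinsupp.finsetSum_apply, Submodule.coe_sum]
    exact Finset.sum_congr rfl fun l _ => (hmul l a _ _).symm

theorem map_freeComponent_eq_inf_range_of_smul_mem {ι M : Type*} [Fintype ι] [DecidableEq ι]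
    [AddCommGroup M] [Module R M] [Module k M] [IsScalarTower k R M] {ℳ : ℤ → Submodule k M}
    [Decomposition ℳ] [SetLike.GradedSMul 𝒜 ℳ] (φ : (ι → R) →ₗ[R] M) {d : ℤ}
    (hφ : ∀ l, φ (Pi.single l 1) ∈ ℳ d) (j : ℤ) :
    (freeComponent 𝒜 ι d j).map (φ.restrictScalars k) =
      ℳ j ⊓ LinearMap.range (φ.restrictScalars k) := by
  have hφ_apply : ∀ x, φ x = ∑ l, x l • φ (Pi.single l 1) := fun x => by
    conv_lhs => rw [pi_eq_sum_univ' x]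
    simp only [map_sum, map_smul]
  have hsmul : ∀ l (r : R), (decompose ℳ (r • φ (Pi.single l 1)) j : M) =
      (decompose 𝒜 r (j - d) : R) • φ (Pi.single l 1) := fun l r => by
    have := decompose_map_of_mapsTo 𝒜 ℳ (add_left_injective d)
      (LinearMap.toSpanSingleton R M _).toAddMonoidHom
      (fun _ _ hr => SetLike.GradedSMul.smul_mem hr (hφ l)) r (j - d)
    rwa [sub_add_cancel] at this
  refine Submodule.map_eq_inf_range_of_proj (fun m => decompose ℳ m j)
    (fun _ => decompose_of_mem_same ℳ) ?_ fun x => ⟨freeProj 𝒜 ι d j x, freeProj_mem _ _ x, ?_⟩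
  · rintro _ ⟨x, hx, rfl⟩
    rw [LinearMap.coe_restrictScalars, hφ_apply]
    refine Submodule.sum_mem _ fun l _ => ?_
    exact sub_add_cancel j d ▸ SetLike.GradedSMul.smul_mem (mem_freeComponent.mp hx l) (hφ l)
  · change φ (freeProj 𝒜 ι d j x) = (decompose ℳ (φ x) j : M)
    rw [hφ_apply, hφ_apply, decompose_sum, DFinsupp.finsetSum_apply, Submodule.coe_sum]
    exact Finset.sum_congr rfl fun l _ => (hsmul l _).symm

theorem map_eq_freeComponent_inf_range {ι L : Type*} [AddCommGroup L] [Module k L]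
    {ℒ : ℤ → Submodule k L} [Decomposition ℒ] (ψ : L →ₗ[k] ι → R) {n : ℤ}
    (hψ : ∀ j, ∀ x ∈ ℒ j, ψ x ∈ freeComponent 𝒜 ι n j) (j : ℤ) :
    (ℒ j).map ψ = freeComponent 𝒜 ι n j ⊓ LinearMap.range ψ :=
  Submodule.map_eq_inf_range_of_proj (freeProj 𝒜 ι n j) (fun _ => freeProj_of_mem)
    (Submodule.map_le_iff_le_comap.mpr (hψ j)) fun x =>
      ⟨decompose ℒ x j, (decompose ℒ x j).2, funext fun a =>
        (decompose_map_of_mapsTo ℒ 𝒜 (sub_left_injective (b := n))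
          ((LinearMap.proj a).comp ψ).toAddMonoidHom
          (fun i y hy => mem_freeComponent.mp (hψ i y hy) a) x j).symm⟩

end FreeModule

theorem finrank_eq_alternating_sum_add_finrank {k R M L : Type*} [Field k] [CommRing R]
    [Algebra k R] [AddCommGroup M] [Module R M] [Module k M] [IsScalarTower k R M]
    [AddCommGroup L] [Module k L] {𝒜 : ℤ → Submodule k R} [Decomposition 𝒜]
    [SetLike.GradedMul 𝒜] [∀ i, FiniteDimensional k (𝒜 i)] {ℳ : ℤ → Submodule k M}
    [Decomposition ℳ] [SetLike.GradedSMul 𝒜 ℳ] {ℒ : ℤ → Submodule k L} [Decomposition ℒ]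
    {m' : ℕ} {b : ℕ → ℕ} (dd : ∀ n : ℕ, n ≤ m' → ((Fin (b (n + 1)) → R) →ₗ[R] (Fin (b n) → R)))
    (aug : (Fin (b 0) → R) →ₗ[R] M) (ιL : L →ₗ[k] (Fin (b (m' + 1)) → R))
    (haug_surj : Function.Surjective aug) (haug_deg : ∀ i, aug (Pi.single i 1) ∈ ℳ 0)
    (hdd_deg : ∀ (n : ℕ) (h : n ≤ m') (i : Fin (b (n + 1))) (j : Fin (b n)),
      dd n h (Pi.single i 1) j ∈ 𝒜 1)
    (hι_inj : Function.Injective ιL)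
    (hι_deg : ∀ j, ∀ x ∈ ℒ j, ιL x ∈ freeComponent 𝒜 _ ((m' : ℤ) + 1) j)
    (hexact_aug : Function.Exact (dd 0 (Nat.zero_le m')) aug)
    (hexact_mid : ∀ (n : ℕ) (h : n + 1 ≤ m'),
      Function.Exact (dd (n + 1) h) (dd n (Nat.le_of_succ_le h)))
    (hexact_top : Function.Exact ιL (dd m' le_rfl)) (j : ℤ) :
    (finrank k (ℳ j) : ℤ) =
      (∑ i ∈ Finset.range (m' + 2), (-1 : ℤ) ^ i * b i * finrank k (𝒜 (j - i))) +
      (-1 : ℤ) ^ (m' + 2) * finrank k (ℒ j) := by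
  have hc (n : ℕ) : finrank k (freeComponent 𝒜 (Fin (b n)) n j) = b n * finrank k (𝒜 (j - n)) := by
    rw [finrank_freeComponent, Fintype.card_fin]
  let dimImage (n : ℕ) : ℤ := if hn : n ≤ m' then
    finrank k ((freeComponent 𝒜 (Fin (b (n + 1))) (n + 1) j).map ((dd n hn).restrictScalars k))
    else 0
  have bottom : (b 0 * finrank k (𝒜 (j - (0 : ℕ))) : ℤ) = dimImage 0 + finrank k (ℳ j) := by
    have hM := map_freeComponent_eq_inf_range_of_smul_mem (𝒜 := 𝒜) aug haug_deg j
    rw [LinearMap.range_eq_top_of_surjective (aug.restrictScalars k) haug_surj, inf_top_eq] at hM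
    have := Submodule.finrank_eq_finrank_map_add_finrank_map_of_exact
      (g := aug.restrictScalars k) hexact_aug
      (map_freeComponent_eq_inf_range_of_mem _ (hdd_deg 0 (Nat.zero_le m')) 0 j)
    rw [hM, show freeComponent 𝒜 (Fin (b 0)) 0 j = freeComponent 𝒜 _ (0 : ℕ) j from rfl, hc] at this
    simp only [dimImage, dif_pos (Nat.zero_le m')]
    exact_mod_cast this
  have middle (n : ℕ) (hn : n + 1 ≤ m') :
      (b (n + 1) * finrank k (𝒜 (j - (n + 1 : ℕ))) : ℤ) = dimImage (n + 1) + dimImage n := by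
    have := Submodule.finrank_eq_finrank_map_add_finrank_map_of_exact
      (g := (dd n _).restrictScalars k) (hexact_mid n hn)
      (map_freeComponent_eq_inf_range_of_mem _ (hdd_deg (n + 1) hn) (n + 1) j)
    rw [← Nat.cast_add_one, hc] at this
    simp only [dimImage, dif_pos hn, dif_pos (Nat.le_of_succ_le hn)]
    exact_mod_cast this
  have top : (b (m' + 1) * finrank k (𝒜 (j - (m' + 1 : ℕ))) : ℤ) =
      finrank k (ℒ j) + dimImage m' := by
    have := Submodule.finrank_eq_finrank_map_add_finrank_map_of_exact
      (g := (dd m' le_rfl).restrictScalars k) hexact_top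
      (map_eq_freeComponent_inf_range ιL hι_deg j)
    rw [← Nat.cast_add_one, hc, ← (ℒ j).equivMapOfInjective _ hι_inj |>.finrank_eq] at this
    simp only [dimImage, dif_pos le_rfl]
    exact_mod_cast this
  rw [Finset.sum_range_succ, eq_alternating_sum_of_telescoping
    (c := fun i => b i * finrank k (𝒜 (j - i))) bottom middle m' le_rfl]
  simp only [mul_assoc]
  rw [top]
  ring

theorem PowerSeries.coeff_mul_eq_of_eq_alternating_sum {b : ℕ → ℤ} {f g : ℤ → ℤ} {N : ℕ}
    (hf : ∀ i < 0, f i = 0)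
    (hg : ∀ j : ℕ, j ≤ N → g j = ∑ i ∈ Finset.range (N + 1), (-1) ^ i * b i * f (j - i))
    {n : ℕ} (hn : n ≤ N) :
    coeff n (mk b * mk fun i => (-1) ^ i * f i) = coeff n (mk fun i => (-1) ^ i * g i) := by
  have htrunc : ∑ i ∈ Finset.range (N + 1), (-1) ^ i * b i * f (n - i) =
      ∑ i ∈ Finset.range (n + 1), (-1) ^ i * b i * f (n - i) := by
    refine (Finset.sum_subset (Finset.range_subset_range.mpr (by omega)) fun i _ hi => ?_).symm
    rw [hf _ (by simp only [Finset.mem_range, not_lt] at hi; omega), mul_zero]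
  rw [coeff_mul, Finset.Nat.sum_antidiagonal_eq_sum_range_succ_mk, coeff_mk, hg n hn, htrunc,
    Finset.mul_sum]
  refine Finset.sum_congr rfl fun i hi => ?_
  have hin : i ≤ n := Nat.lt_succ_iff.mp (Finset.mem_range.mp hi)
  have hsign : (-1 : ℤ) ^ n = (-1) ^ (n - i) * (-1) ^ i := by
    rw [← pow_add, Nat.sub_add_cancel hin]
  have hsq : ((-1 : ℤ) ^ i) ^ 2 = 1 := by rw [← pow_mul, mul_comm, pow_mul]; norm_num
  simp only [coeff_mk]
  rw [Nat.cast_sub hin, hsign]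
  linear_combination (-(-1) ^ (n - i) * b i * f (n - i)) * hsq

theorem stmt16_general {k R M L : Type*} [Field k] [CommRing R] [Algebra k R]
    [AddCommGroup M] [Module R M] [Module k M] [IsScalarTower k R M]
    [AddCommGroup L] [Module R L] [Module k L] [IsScalarTower k R L]
    (𝒜 : ℤ → Submodule k R) (hR : IsStandardGraded k R 𝒜)
    (ℳ : ℤ → Submodule k M) (hM : IsGradedModule k R 𝒜 M ℳ)
    (ℒ : ℤ → Submodule k L) (hL : IsGradedModule k R 𝒜 L ℒ)
    (m' : ℕ) (b : ℕ → ℕ)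
    (dd : ∀ n : ℕ, n ≤ m' → ((Fin (b (n + 1)) → R) →ₗ[R] (Fin (b n) → R)))
    (aug : (Fin (b 0) → R) →ₗ[R] M)
    (ιL : L →ₗ[R] (Fin (b (m' + 1)) → R))
    (haug_surj : Function.Surjective aug)
    (haug_deg : ∀ i, aug (Pi.single i 1) ∈ ℳ 0)
    (hdd_deg : ∀ (n : ℕ) (h : n ≤ m') (i : Fin (b (n + 1))) (j : Fin (b n)),
      dd n h (Pi.single i 1) j ∈ 𝒜 1)
    (hι_inj : Function.Injective ιL)
    (hι_deg : ∀ (j : ℤ), ∀ x ∈ ℒ j, ∀ i : Fin (b (m' + 1)),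
      ιL x i ∈ 𝒜 (j - (m' + 1)))
    (hexact_aug : Function.Exact (dd 0 (Nat.zero_le m')) aug)
    (hexact_mid : ∀ (n : ℕ) (h : n + 1 ≤ m'),
      Function.Exact (dd (n + 1) h) (dd n (Nat.le_of_succ_le h)))
    (hexact_top : Function.Exact ιL (dd m' le_rfl))
    (hLvanish : ∀ j : ℤ, j ≤ (m' : ℤ) + 1 → ℒ j = ⊥) :
    (∀ j : ℤ, (Module.finrank k (ℳ j) : ℤ) =
      (∑ i ∈ Finset.range (m' + 2),
        (-1 : ℤ) ^ i * b i * Module.finrank k (𝒜 (j - i))) +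
      (-1 : ℤ) ^ (m' + 2) * Module.finrank k (ℒ j)) ∧
    (∀ n : ℕ, n ≤ m' + 1 →
      PowerSeries.coeff n ((PowerSeries.mk fun i => (b i : ℤ)) *
        (PowerSeries.mk fun i => (-1 : ℤ) ^ i * Module.finrank k (𝒜 (i : ℤ)))) =
      PowerSeries.coeff n
        (PowerSeries.mk fun i => (-1 : ℤ) ^ i * Module.finrank k (ℳ (i : ℤ)))) := by
  let := hR.internal.chooseDecomposition
  let := hM.internal.chooseDecomposition
  let := hL.internal.chooseDecomposition
  have : SetLike.GradedMul 𝒜 := ⟨hR.mul_mem⟩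
  have : SetLike.GradedSMul 𝒜 ℳ := ⟨fun _ _ _ _ hx hm => hM.smul_mem hx hm⟩
  have := hR.finite_dim
  have hilbert := finrank_eq_alternating_sum_add_finrank dd aug (ιL.restrictScalars k) haug_surj
    haug_deg hdd_deg hι_inj (fun j x hx => mem_freeComponent.mpr (hι_deg j x hx)) hexact_aug
    hexact_mid hexact_top
  refine ⟨hilbert, fun n hn => PowerSeries.coeff_mul_eq_of_eq_alternating_sum
    (f := fun i => finrank k (𝒜 i)) (g := fun j => finrank k (ℳ j))
    (fun i hi => by rw [hR.bot_of_neg i hi, finrank_bot, Nat.cast_zero]) (fun j hj => ?_) hn⟩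
  rw [hilbert, hLvanish j (by exact_mod_cast hj), finrank_bot, Nat.cast_zero, mul_zero, add_zero]

/-- Proposition 1.7, (i)⇒(ii): let `R` be Koszul, and let
`0 → L → R(−m)^{b_m} → ⋯ → R(−1)^{b_1} → R^{b_0} → M → 0` (here `m = m' + 1 ≥ 1`)
be an exact sequence of graded `R`-modules with `L_j = 0` for `j ≤ m`.  Then
`H_M(s) = Σ_{i=0}^m (−1)^i b_i s^i H_R(s) + (−1)^{m+1} H_L(s)` (coefficientwise),
and consequently `P^R_M(s,t) ≡ H_M(−st)·H_R(−st)^{−1} (mod t^{m+1})`, i.e.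
`(Σ_i b_i t^i)·H_R(−t) ≡ H_M(−t)` modulo `t^{m+1}`. -/
theorem stmt16 {k R M L : Type*} [Field k] [CommRing R] [Algebra k R]
    [AddCommGroup M] [Module R M] [Module k M] [IsScalarTower k R M]
    [AddCommGroup L] [Module R L] [Module k L] [IsScalarTower k R L]
    (𝒜 : ℤ → Submodule k R) (hR : IsStandardGraded k R 𝒜)
    (hKoszul : IsKoszulAlgebra k R 𝒜)
    (ℳ : ℤ → Submodule k M) (hM : IsGradedModule k R 𝒜 M ℳ)
    (hMind : ∀ j : ℤ, j < 0 → ℳ j = ⊥)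
    (ℒ : ℤ → Submodule k L) (hL : IsGradedModule k R 𝒜 L ℒ)
    (m' : ℕ) (b : ℕ → ℕ)
    (dd : ∀ n : ℕ, n ≤ m' → ((Fin (b (n + 1)) → R) →ₗ[R] (Fin (b n) → R)))
    (aug : (Fin (b 0) → R) →ₗ[R] M)
    (ιL : L →ₗ[R] (Fin (b (m' + 1)) → R))
    (haug_surj : Function.Surjective aug)
    (haug_deg : ∀ i, aug (Pi.single i 1) ∈ ℳ 0)
    (hdd_deg : ∀ (n : ℕ) (h : n ≤ m') (i : Fin (b (n + 1))) (j : Fin (b n)),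
      dd n h (Pi.single i 1) j ∈ 𝒜 1)
    (hι_inj : Function.Injective ιL)
    (hι_deg : ∀ (j : ℤ), ∀ x ∈ ℒ j, ∀ i : Fin (b (m' + 1)),
      ιL x i ∈ 𝒜 (j - (m' + 1)))
    (hexact_aug : Function.Exact (dd 0 (Nat.zero_le m')) aug)
    (hexact_mid : ∀ (n : ℕ) (h : n + 1 ≤ m'),
      Function.Exact (dd (n + 1) h) (dd n (Nat.le_of_succ_le h)))
    (hexact_top : Function.Exact ιL (dd m' le_rfl))
    (hLvanish : ∀ j : ℤ, j ≤ (m' : ℤ) + 1 → ℒ j = ⊥) :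
    (∀ j : ℤ, (Module.finrank k (ℳ j) : ℤ) =
      (∑ i ∈ Finset.range (m' + 2),
        (-1 : ℤ) ^ i * b i * Module.finrank k (𝒜 (j - i))) +
      (-1 : ℤ) ^ (m' + 2) * Module.finrank k (ℒ j)) ∧
    (∀ n : ℕ, n ≤ m' + 1 →
      PowerSeries.coeff n ((PowerSeries.mk fun i => (b i : ℤ)) *
        (PowerSeries.mk fun i => (-1 : ℤ) ^ i * Module.finrank k (𝒜 (i : ℤ)))) =
      PowerSeries.coeff n
        (PowerSeries.mk fun i => (-1 : ℤ) ^ i * Module.finrank k (ℳ (i : ℤ)))) :=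
  stmt16_general 𝒜 hR ℳ hM ℒ hL m' b dd aug ιL haug_surj haug_deg hdd_deg hι_inj hι_deg hexact_aug
    hexact_mid hexact_top hLvanish
end

section
/- Let u, v be real numbers with 0 < u ≤ v, u + v = e and uv = r for integers e, r, and suppose the power series expansion of s^d(p − qst)/((1−ust)(1−vst)) in ℤ[s^{±1}][[t]] has all coefficients nonnegative integers, where p ≥ 1, q ≥ 0 are integers. If additionally infinitely many coefficients are positive (the module is not free) and q = vp, then u ∈ ℤ. -/
/-!
Comparing the coefficients of `1` and `t` in `(Σ cᵢ tⁱ)(1 - e t + r t²) = p - q t` gives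
`c₀ = p` and `c₁ = e p - q = u p`. Hence `u = c₁ / p` is rational; being a root of the monic
integer polynomial `x² - e x + r`, it is an integer since `ℤ` is integrally closed.
-/

open PowerSeries

theorem PowerSeries.coeff_zero_one_of_mk_mul_eq {R : Type*} [CommRing R] {c : ℕ → R}
    {u v a b : R} (h : mk c * ((1 - C u * X) * (1 - C v * X)) = C a - C b * X) :
    c 0 = a ∧ c 1 = (u + v) * a - b := by
  have h0 := congrArg (coeff 0) h
  have h1 := congrArg (coeff 1) h
  simp [coeff_mul, Finset.Nat.antidiagonal_succ, coeff_one] at h0 h1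
  exact ⟨h0, by rw [← h0]; linear_combination h1⟩

theorem Rat.exists_int_eq_of_sq_sub_mul_add_eq_zero {x : ℚ} {e r : ℤ}
    (h : x ^ 2 - e * x + r = 0) : ∃ n : ℤ, x = n := by
  have hx : IsIntegral ℤ x := by
    refine ⟨Polynomial.X ^ 2 - Polynomial.C e * Polynomial.X + Polynomial.C r, by monicity!, ?_⟩
    simp only [Polynomial.eval₂_add, Polynomial.eval₂_sub, Polynomial.eval₂_mul,
      Polynomial.eval₂_pow, Polynomial.eval₂_X, Polynomial.eval₂_C]
    simpa using h
  obtain ⟨n, hn⟩ := IsIntegrallyClosed.isIntegral_iff.mp hx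
  exact ⟨n, by simp [← hn]⟩

theorem Real.exists_int_eq_of_add_eq_of_mul_eq {u v : ℝ} {e r : ℤ} (hsum : u + v = e)
    (hprod : u * v = r) (hrat : ∃ x : ℚ, u = x) : ∃ n : ℤ, u = n := by
  obtain ⟨x, rfl⟩ := hrat
  have hroot : x ^ 2 - e * x + r = 0 := by
    have : ((x ^ 2 - e * x + r : ℚ) : ℝ) = 0 := by
      push_cast
      rw [← hsum, ← hprod]
      ring
    exact_mod_cast this
  obtain ⟨n, rfl⟩ := Rat.exists_int_eq_of_sq_sub_mul_add_eq_zero hroot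
  exact ⟨n, by simp⟩

theorem stmt19_general (e r : ℤ) (u v : ℝ)
    (hsum : u + v = (e : ℝ)) (hprod : u * v = (r : ℝ))
    (p q : ℕ) (hp : 1 ≤ p)
    (c : ℕ → ℝ)
    (hc : (PowerSeries.mk c) *
        ((1 - PowerSeries.C u * PowerSeries.X) * (1 - PowerSeries.C v * PowerSeries.X)) =
      PowerSeries.C (p : ℝ) - PowerSeries.C (q : ℝ) * PowerSeries.X)
    (hint : ∀ i : ℕ, ∃ n : ℕ, c i = (n : ℝ))
    (hq : (q : ℝ) = v * p) :
    ∃ n : ℤ, u = (n : ℝ) := by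
  obtain ⟨-, hc₁⟩ := PowerSeries.coeff_zero_one_of_mk_mul_eq hc
  have hc₁_eq : c 1 = u * p := by rw [hc₁, hq]; ring
  obtain ⟨n, hn⟩ := hint 1
  have hp₀ : (p : ℝ) ≠ 0 := by exact_mod_cast (by omega : p ≠ 0)
  refine Real.exists_int_eq_of_add_eq_of_mul_eq hsum hprod ⟨n / p, ?_⟩
  push_cast
  rw [eq_div_iff hp₀, ← hn, hc₁_eq]

/-- the integrality conclusion of Corollary 1.6. Let `0 < u ≤ v`
be real with `u + v = e` and `u·v = r` for integers `e, r`, and suppose all the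
coefficients of the expansion of `s^d(p − q s t)/((1−ust)(1−vst))`, equivalently
(on the diagonal) of `(p − qt)/((1−ut)(1−vt)) = Σ c_i t^i`, are nonnegative
integers, with `p ≥ 1`, `q ≥ 0`. If infinitely many coefficients are positive
(the module is not free) and `q = v·p`, then `u ∈ ℤ`. -/
theorem stmt19 (e r : ℤ) (u v : ℝ) (hu : 0 < u) (huv : u ≤ v)
    (hsum : u + v = (e : ℝ)) (hprod : u * v = (r : ℝ))
    (p q : ℕ) (hp : 1 ≤ p) (d : ℤ)
    (c : ℕ → ℝ)
    (hc : (PowerSeries.mk c) *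
        ((1 - PowerSeries.C u * PowerSeries.X) * (1 - PowerSeries.C v * PowerSeries.X)) =
      PowerSeries.C (p : ℝ) - PowerSeries.C (q : ℝ) * PowerSeries.X)
    (hint : ∀ i : ℕ, ∃ n : ℕ, c i = (n : ℝ))
    (hinf : ∀ N : ℕ, ∃ i : ℕ, N ≤ i ∧ 0 < c i)
    (hq : (q : ℝ) = v * p) :
    ∃ n : ℤ, u = (n : ℝ) :=
  stmt19_general e r u v hsum hprod p q hp c hc hint hq
end
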